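/- arXiv:1807.00481 — 7 statements merged into one kernel-verified Lean document; each statement's English description precedes it below -/
import Mathlib

section
/- Let n ≥ 1 and let A, B be involutions of Fin n each having at most one fixed point (maximum matchings of the complete graph on Fin n). Then there exists a permutation π of Fin n such that π A π⁻¹ = B and π B π⁻¹ = A. -/
open Equiv Equiv.Perm

private lemma zappSwap {n : ℕ} (c : Equiv.Perm (Fin n)) (i j : ℤ) (x : Fin n) :
    (c ^ i) ((c ^ j) x) = (c ^ (i + j)) x := by
  rw [← Equiv.Perm.mul_apply, ← zpow_add]

private lemma zappOneSwap {n : ℕ} (c : Equiv.Perm (Fin n)) (k : ℤ) (x : Fin n) :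
    c ((c ^ k) x) = (c ^ (1 + k)) x := by
  have h := zappSwap c 1 k x
  rwa [zpow_one] at h

private lemma fixNegSwap {n : ℕ} {c : Equiv.Perm (Fin n)} {m : ℤ} {x : Fin n}
    (h : (c ^ m) x = x) : (c ^ (-m)) x = x := by
  have h2 := congrArg (⇑(c ^ (-m))) h
  rw [zappSwap, neg_add_cancel, zpow_zero, Equiv.Perm.one_apply] at h2
  exact h2.symm

private lemma existsPeriodSwap {n : ℕ} (c : Equiv.Perm (Fin n)) (p : Fin n) :
    ∃ k : ℕ, 0 < k ∧ ∀ j : ℤ, (c ^ j) p = p ↔ (k : ℤ) ∣ j := by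
  classical
  set S : AddSubgroup ℤ :=
    { carrier := {j : ℤ | (c ^ j) p = p}
      zero_mem' := by simp
      add_mem' := by
        intro a b ha hb
        simp only [Set.mem_setOf_eq] at *
        rw [zpow_add, Equiv.Perm.mul_apply, hb, ha]
      neg_mem' := by
        intro a ha
        simp only [Set.mem_setOf_eq] at *
        exact fixNegSwap ha } with hS
  have hmemS : ∀ j : ℤ, j ∈ S ↔ (c ^ j) p = p := fun j => Iff.rfl
  obtain ⟨g, hg⟩ := Int.subgroup_cyclic S
  have hmem : ∀ j : ℤ, (c ^ j) p = p ↔ g ∣ j := by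
    intro j
    rw [← hmemS, hg, AddSubgroup.mem_closure_singleton, dvd_iff_exists_eq_mul_left]
    exact exists_congr fun m => by rw [zsmul_eq_mul]; exact eq_comm
  have hN : (c ^ ((orderOf c : ℕ) : ℤ)) p = p := by
    rw [zpow_natCast, pow_orderOf_eq_one, Equiv.Perm.one_apply]
  have hg0 : g ≠ 0 := by
    intro h0
    have hd : g ∣ ((orderOf c : ℕ) : ℤ) := (hmem _).mp hN
    rw [h0] at hd
    have h1 : ((orderOf c : ℕ) : ℤ) = 0 := zero_dvd_iff.mp hd
    have h2 : 0 < orderOf c := orderOf_pos c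
    omega
  refine ⟨g.natAbs, Int.natAbs_pos.mpr hg0, fun j => (hmem j).trans ?_⟩
  exact Int.natAbs_dvd.symm

private lemma conjZSwap {n : ℕ} {A B : Equiv.Perm (Fin n)} (hA1 : A * A = 1) (hB1 : B * B = 1)
    (j : ℤ) (x : Fin n) : ((A * B) ^ j) (A x) = A (((A * B) ^ (-j)) x) := by
  have hAinv : A⁻¹ = A := inv_eq_of_mul_eq_one_right hA1
  have hBinv : B⁻¹ = B := inv_eq_of_mul_eq_one_right hB1
  have h1 : A * (A * B) * A⁻¹ = (A * B)⁻¹ := by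
    rw [mul_inv_rev, hAinv, hBinv, ← mul_assoc, hA1, one_mul]
  have h2 : ∀ i : ℤ, A * (A * B) ^ i * A⁻¹ = (A * B) ^ (-i) := by
    intro i
    have h3 := map_zpow (MulAut.conj A) (A * B) i
    simp only [MulAut.conj_apply] at h3
    rw [h3, h1, inv_zpow, ← zpow_neg]
  have h3 : (A * B) ^ j * A = A * (A * B) ^ (-j) := by
    have h4 := h2 (-j)
    rw [neg_neg] at h4
    rw [← h4, hAinv, mul_assoc (A * (A * B) ^ (-j)) A A, hA1, mul_one]
  rw [← Equiv.Perm.mul_apply, h3, Equiv.Perm.mul_apply]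

private lemma conjZSwap' {n : ℕ} {A B : Equiv.Perm (Fin n)} (hA1 : A * A = 1) (hB1 : B * B = 1)
    (j : ℤ) (x : Fin n) : A (((A * B) ^ j) x) = ((A * B) ^ (-j)) (A x) := by
  have h := conjZSwap hA1 hB1 (-j) x
  rw [neg_neg] at h
  exact h.symm

private lemma fixASwap {n : ℕ} {A B : Equiv.Perm (Fin n)} (hA1 : A * A = 1) (hB1 : B * B = 1)
    (m : ℤ) (x : Fin n) (h : ((A * B) ^ m) x = x) : ((A * B) ^ m) (A x) = A x := by
  rw [conjZSwap hA1 hB1, fixNegSwap h]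

private lemma scASwap {n : ℕ} {A B : Equiv.Perm (Fin n)} (hA1 : A * A = 1) (hB1 : B * B = 1)
    {x y : Fin n} (h : (A * B).SameCycle x y) : (A * B).SameCycle (A x) (A y) := by
  obtain ⟨i, hi⟩ := h
  exact ⟨-i, by rw [conjZSwap hA1 hB1 (-i) x, neg_neg, hi]⟩

private lemma existsAFixSwap {n : ℕ} {A B : Equiv.Perm (Fin n)}
    (hA1 : A * A = 1) (hB1 : B * B = 1)
    (hB2 : ∀ x y, B x = x → B y = y → x = y)
    (p : Fin n) (hp : (A * B).SameCycle p (A p)) :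
    ∃ z, (A * B).SameCycle p z ∧ A z = z := by
  obtain ⟨m, hm, hdvd⟩ := existsPeriodSwap (A * B) p
  obtain ⟨t, ht⟩ := hp
  have hApow : ∀ k : ℤ, A (((A * B) ^ k) p) = ((A * B) ^ (t - k)) p := by
    intro k
    rw [conjZSwap' hA1 hB1, ← ht, zappSwap, show -k + t = t - k from by ring]
  have hBc : ∀ x, B x = A ((A * B) x) := by
    intro x
    rw [← Equiv.Perm.mul_apply, ← mul_assoc, hA1, one_mul]
  have hBpow : ∀ k : ℤ, B (((A * B) ^ k) p) = ((A * B) ^ (t - 1 - k)) p := by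
    intro k
    rw [hBc, zappOneSwap, hApow, show t - (1 + k) = t - 1 - k from by ring]
  rcases Int.even_or_odd t with ⟨u, hu⟩ | ⟨u, hu⟩
  · refine ⟨((A * B) ^ u) p, ⟨u, rfl⟩, ?_⟩
    rw [hApow, show t - u = u from by omega]
  · rcases Nat.even_or_odd m with ⟨v, hv⟩ | ⟨v, hv⟩
    · exfalso
      have hmz : ((A * B) ^ ((m : ℕ) : ℤ)) p = p := (hdvd _).mpr dvd_rfl
      have hz1 : B (((A * B) ^ u) p) = ((A * B) ^ u) p := by
        rw [hBpow, show t - 1 - u = u from by omega]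
      have hz2 : B (((A * B) ^ (u + (v : ℤ))) p) = ((A * B) ^ (u + (v : ℤ))) p := by
        rw [hBpow, show t - 1 - (u + (v : ℤ)) = (u + (v : ℤ)) + -((m : ℕ) : ℤ) from by omega,
          ← zappSwap, fixNegSwap hmz]
      have heq := hB2 _ _ hz1 hz2
      have hvp : ((A * B) ^ (v : ℤ)) p = p := by
        have h5 := congrArg (⇑((A * B) ^ (-u))) heq
        rw [zappSwap, zappSwap, show -u + u = (0 : ℤ) from by ring,
          show -u + (u + (v : ℤ)) = (v : ℤ) from by ring, zpow_zero, Equiv.Perm.one_apply] at h5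
        exact h5.symm
      have hdv : (m : ℕ) ∣ v := Int.natCast_dvd_natCast.mp ((hdvd _).mp hvp)
      have hle := Nat.le_of_dvd (by omega) hdv
      omega
    · refine ⟨((A * B) ^ (u + (v : ℤ) + 1)) p, ⟨u + (v : ℤ) + 1, rfl⟩, ?_⟩
      have hmz : ((A * B) ^ ((m : ℕ) : ℤ)) p = p := (hdvd _).mpr dvd_rfl
      rw [hApow, show t - (u + (v : ℤ) + 1) = u - (v : ℤ) from by omega,
        show u + (v : ℤ) + 1 = (u - (v : ℤ)) + ((m : ℕ) : ℤ) from by omega,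
        ← zappSwap, hmz]

private lemma oddHalfSwap {n : ℕ} {A B : Equiv.Perm (Fin n)}
    (hA1 : A * A = 1) (hB1 : B * B = 1)
    (hA2 : ∀ x y, A x = x → A y = y → x = y)
    (a : Fin n) (ha : A a = a) : ∃ Dh : ℤ, ((A * B) ^ (2 * Dh + 1)) a = a := by
  obtain ⟨m, hm, hdvd⟩ := existsPeriodSwap (A * B) a
  rcases Nat.even_or_odd m with ⟨v, hv⟩ | ⟨v, hv⟩
  · exfalso
    have hmz : ((A * B) ^ ((m : ℕ) : ℤ)) a = a := (hdvd _).mpr dvd_rfl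
    have hApow : ∀ k : ℤ, A (((A * B) ^ k) a) = ((A * B) ^ (-k)) a := by
      intro k
      rw [conjZSwap' hA1 hB1, ha]
    have hfix : A (((A * B) ^ (v : ℤ)) a) = ((A * B) ^ (v : ℤ)) a := by
      rw [hApow, show -(v : ℤ) = (v : ℤ) + -((m : ℕ) : ℤ) from by omega,
        ← zappSwap, fixNegSwap hmz]
    have heq := hA2 _ _ hfix ha
    have hdv : (m : ℕ) ∣ v := Int.natCast_dvd_natCast.mp ((hdvd _).mp heq)
    have hle := Nat.le_of_dvd (by omega) hdv
    omega
  · refine ⟨(v : ℤ), ?_⟩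
    rw [show 2 * (v : ℤ) + 1 = ((m : ℕ) : ℤ) from by omega]
    exact (hdvd _).mpr dvd_rfl

private lemma repSwap {n : ℕ} {A B : Equiv.Perm (Fin n)}
    (hA1 : A * A = 1) (hB1 : B * B = 1)
    (hA2 : ∀ x y, A x = x → A y = y → x = y)
    (hB2 : ∀ x y, B x = x → B y = y → x = y) :
    ∃ (r : Fin n → Fin n) (D : Fin n → ℤ),
      (∀ y, (A * B).SameCycle y (r y)) ∧
      (∀ x y, (A * B).SameCycle x y → r x = r y ∧ D x = D y) ∧
      (∀ y, r (A y) = A (r y)) ∧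
      (∀ y, r (r y) = r y) ∧
      (∀ y, ((A * B) ^ (D y + D (A y) + 1)) (r y) = r y) := by
  classical
  have hAA : ∀ x, A (A x) = x := fun x => by
    rw [← Equiv.Perm.mul_apply, hA1, Equiv.Perm.one_apply]
  have hEsymm : ∀ {x y : Fin n},
      ((A * B).SameCycle x y ∨ (A * B).SameCycle x (A y)) →
      ((A * B).SameCycle y x ∨ (A * B).SameCycle y (A x)) := by
    rintro x y (h | h)
    · exact Or.inl h.symm
    · right
      have h2 := scASwap hA1 hB1 h
      rw [hAA] at h2
      exact h2.symm
  have hEtrans : ∀ {x y z : Fin n},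
      ((A * B).SameCycle x y ∨ (A * B).SameCycle x (A y)) →
      ((A * B).SameCycle y z ∨ (A * B).SameCycle y (A z)) →
      ((A * B).SameCycle x z ∨ (A * B).SameCycle x (A z)) := by
    rintro x y z (h1 | h1) (h2 | h2)
    · exact Or.inl (h1.trans h2)
    · exact Or.inr (h1.trans h2)
    · exact Or.inr (h1.trans (scASwap hA1 hB1 h2))
    · left
      have h3 := scASwap hA1 hB1 h2
      rw [hAA] at h3
      exact h1.trans h3
  have hne : ∀ y : Fin n, (Finset.univ.filter
      (fun z => (A * B).SameCycle y z ∨ (A * B).SameCycle y (A z))).Nonempty := by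
    intro y
    exact ⟨y, by simp [Equiv.Perm.SameCycle.refl]⟩
  let p0 : Fin n → Fin n := fun y => (Finset.univ.filter
      (fun z => (A * B).SameCycle y z ∨ (A * B).SameCycle y (A z))).min' (hne y)
  have hp0mem : ∀ y, (A * B).SameCycle y (p0 y) ∨ (A * B).SameCycle y (A (p0 y)) := by
    intro y
    have h := Finset.min'_mem _ (hne y)
    simp only [Finset.mem_filter, Finset.mem_univ, true_and] at h
    exact h
  have hp0c : ∀ x y : Fin n,
      ((A * B).SameCycle x y ∨ (A * B).SameCycle x (A y)) → p0 x = p0 y := by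
    intro x y hxy
    have hset : (Finset.univ.filter
        (fun z => (A * B).SameCycle x z ∨ (A * B).SameCycle x (A z))) =
        (Finset.univ.filter
        (fun z => (A * B).SameCycle y z ∨ (A * B).SameCycle y (A z))) := by
      ext z
      simp only [Finset.mem_filter, Finset.mem_univ, true_and]
      exact ⟨fun h => hEtrans (hEsymm hxy) h, fun h => hEtrans hxy h⟩
    show Finset.min' _ (hne x) = Finset.min' _ (hne y)
    congr 1
  -- fixed points in A-invariant cycles
  have hfxE : ∀ p : Fin n, ∃ z,
      (A * B).SameCycle p (A p) → ((A * B).SameCycle p z ∧ A z = z) := by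
    intro p
    by_cases hp : (A * B).SameCycle p (A p)
    · obtain ⟨z, h1, h2⟩ := existsAFixSwap hA1 hB1 hB2 p hp
      exact ⟨z, fun _ => ⟨h1, h2⟩⟩
    · exact ⟨p, fun h => absurd h hp⟩
  choose fx hfx using hfxE
  have hDhE : ∀ p : Fin n, ∃ Dz : ℤ,
      (A * B).SameCycle p (A p) → ((A * B) ^ (2 * Dz + 1)) (fx p) = fx p := by
    intro p
    by_cases hp : (A * B).SameCycle p (A p)
    · obtain ⟨Dz, hDz⟩ := oddHalfSwap hA1 hB1 hA2 (fx p) (hfx p hp).2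
      exact ⟨Dz, fun _ => hDz⟩
    · exact ⟨0, fun h => absurd h hp⟩
  choose Dh hDh using hDhE
  refine ⟨fun y => if (A * B).SameCycle (p0 y) (A (p0 y)) then fx (p0 y)
      else (if (A * B).SameCycle y (p0 y) then p0 y else A (p0 y)),
    fun y => if (A * B).SameCycle (p0 y) (A (p0 y)) then Dh (p0 y)
      else (if (A * B).SameCycle y (p0 y) then 0 else -1), ?_, ?_, ?_, ?_, ?_⟩
  -- P1 : SameCycle y (r y)
  · intro y
    by_cases hinv : (A * B).SameCycle (p0 y) (A (p0 y))
    · simp only [if_pos hinv]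
      have hyp0 : (A * B).SameCycle y (p0 y) := by
        rcases hp0mem y with h | h
        · exact h
        · exact h.trans hinv.symm
      exact hyp0.trans (hfx (p0 y) hinv).1
    · by_cases hyp : (A * B).SameCycle y (p0 y)
      · simp only [if_neg hinv, if_pos hyp]
        exact hyp
      · simp only [if_neg hinv, if_neg hyp]
        exact (hp0mem y).resolve_left hyp
  -- P2 : constancy on cycles
  · intro x y hxy
    have hp0xy : p0 x = p0 y := hp0c _ _ (Or.inl hxy)
    have hiff : (A * B).SameCycle x (p0 y) ↔ (A * B).SameCycle y (p0 y) :=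
      ⟨fun h => hxy.symm.trans h, fun h => hxy.trans h⟩
    constructor <;> simp [hp0xy, hiff]
  -- P3 : r (A y) = A (r y)
  · intro y
    have hpA : p0 (A y) = p0 y := by
      apply hp0c
      right
      exact Equiv.Perm.SameCycle.refl _ _
    by_cases hinv : (A * B).SameCycle (p0 y) (A (p0 y))
    · simp only [hpA, if_pos hinv]
      exact ((hfx (p0 y) hinv).2).symm
    · by_cases hyp : (A * B).SameCycle y (p0 y)
      · have h2 : ¬ (A * B).SameCycle (A y) (p0 y) := by
          intro h
          have h3 := scASwap hA1 hB1 h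
          rw [hAA] at h3
          exact hinv (hyp.symm.trans h3)
        simp only [hpA, if_neg hinv, if_pos hyp, if_neg h2]
      · have h1 : (A * B).SameCycle y (A (p0 y)) := (hp0mem y).resolve_left hyp
        have h2 : (A * B).SameCycle (A y) (p0 y) := by
          have h3 := scASwap hA1 hB1 h1
          rw [hAA] at h3
          exact h3
        simp only [hpA, if_neg hinv, if_neg hyp, if_pos h2]
        rw [hAA]
  -- P5 : r (r y) = r y
  · intro y
    by_cases hinv : (A * B).SameCycle (p0 y) (A (p0 y))
    · have hyp0 : (A * B).SameCycle y (p0 y) := by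
        rcases hp0mem y with h | h
        · exact h
        · exact h.trans hinv.symm
      have hsc : (A * B).SameCycle y (fx (p0 y)) := hyp0.trans (hfx (p0 y) hinv).1
      have hp : p0 (fx (p0 y)) = p0 y := hp0c _ _ (Or.inl hsc.symm)
      simp only [if_pos hinv, hp]
    · by_cases hyp : (A * B).SameCycle y (p0 y)
      · have hp : p0 (p0 y) = p0 y := hp0c _ _ (Or.inl hyp.symm)
        have hself : (A * B).SameCycle (p0 y) (p0 y) := Equiv.Perm.SameCycle.refl _ _
        simp only [if_neg hinv, if_pos hyp, hp, if_pos hself]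
      · have h1 : (A * B).SameCycle y (A (p0 y)) := (hp0mem y).resolve_left hyp
        have hpApy : p0 (A (p0 y)) = p0 y := hp0c _ _ (hEsymm (Or.inl h1))
        have hnot : ¬ (A * B).SameCycle (A (p0 y)) (p0 y) := fun h => hinv h.symm
        simp only [if_neg hinv, if_neg hyp, hpApy, if_neg hnot]
  -- P4 : exponent condition
  · intro y
    have hpA : p0 (A y) = p0 y := by
      apply hp0c
      right
      exact Equiv.Perm.SameCycle.refl _ _
    by_cases hinv : (A * B).SameCycle (p0 y) (A (p0 y))
    · simp only [hpA, if_pos hinv]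
      rw [show Dh (p0 y) + Dh (p0 y) + 1 = 2 * Dh (p0 y) + 1 from by ring]
      exact hDh (p0 y) hinv
    · by_cases hyp : (A * B).SameCycle y (p0 y)
      · have h2 : ¬ (A * B).SameCycle (A y) (p0 y) := by
          intro h
          have h3 := scASwap hA1 hB1 h
          rw [hAA] at h3
          exact hinv (hyp.symm.trans h3)
        simp only [hpA, if_neg hinv, if_pos hyp, if_neg h2]
        rw [show (0 : ℤ) + -1 + 1 = 0 from by ring, zpow_zero, Equiv.Perm.one_apply]
      · have h1 : (A * B).SameCycle y (A (p0 y)) := (hp0mem y).resolve_left hyp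
        have h2 : (A * B).SameCycle (A y) (p0 y) := by
          have h3 := scASwap hA1 hB1 h1
          rw [hAA] at h3
          exact h3
        simp only [hpA, if_neg hinv, if_neg hyp, if_pos h2]
        rw [show (-1 : ℤ) + 0 + 1 = 0 from by ring, zpow_zero, Equiv.Perm.one_apply]

/-- For any two maximum matchings of the complete graph on `Fin n` (involutions with at
most one fixed point), there is a permutation conjugating the first to the second and
simultaneously the second to the first. -/
theorem exists_perm_swap_matchings (n : ℕ) (hn : 1 ≤ n)
    (A B : Equiv.Perm (Fin n))
    (hA : A * A = 1 ∧ ∀ x y, A x = x → A y = y → x = y)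
    (hB : B * B = 1 ∧ ∀ x y, B x = x → B y = y → x = y) :
    ∃ π : Equiv.Perm (Fin n), π * A * π⁻¹ = B ∧ π * B * π⁻¹ = A := by
  classical
  obtain ⟨hA1, hA2⟩ := hA
  obtain ⟨hB1, hB2⟩ := hB
  obtain ⟨r, D, hP1, hP2, hP3, hP5, hP4⟩ := repSwap hA1 hB1 hA2 hB2
  have hAA : ∀ x, A (A x) = x := fun x => by
    rw [← Equiv.Perm.mul_apply, hA1, Equiv.Perm.one_apply]
  choose kf hkf using fun y => ((hP1 y).symm : (A * B).SameCycle (r y) y)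
  let σf : Fin n → Fin n := fun y => ((A * B) ^ (kf y - D y)) (A (r y))
  have hσσ : ∀ y, σf (σf y) = (A * B) y := by
    intro y
    have hσfy : σf y = ((A * B) ^ (kf y - D y)) (A (r y)) := rfl
    have h1 : (A * B).SameCycle (A (r y)) (σf y) := ⟨kf y - D y, hσfy.symm⟩
    have hrz : r (σf y) = A (r y) := by
      rw [← (hP2 _ _ h1).1, hP3, hP5]
    have hDz : D (σf y) = D (A y) := by
      have h3 : (A * B).SameCycle (A y) (A (r y)) := scASwap hA1 hB1 (hP1 y)
      rw [← (hP2 _ _ h1).2, ← (hP2 _ _ h3).2]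
    have hkz : ((A * B) ^ (kf (σf y))) (A (r y)) = σf y := by
      have h4 := hkf (σf y)
      rwa [hrz] at h4
    have hfix1 : ((A * B) ^ (kf (σf y) - (kf y - D y))) (A (r y)) = A (r y) := by
      have h4 := congrArg (⇑((A * B) ^ (-(kf y - D y)))) hkz
      rw [zappSwap, hσfy, zappSwap,
        show -(kf y - D y) + (kf y - D y) = (0 : ℤ) from by ring, zpow_zero,
        Equiv.Perm.one_apply] at h4
      rw [show kf (σf y) - (kf y - D y) = -(kf y - D y) + kf (σf y) from by ring]
      exact h4
    have hfix2 : ((A * B) ^ (kf (σf y) - (kf y - D y))) (r y) = r y := by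
      have h5 := fixASwap hA1 hB1 _ _ hfix1
      rwa [hAA] at h5
    have hs1 : ((A * B) ^ (-(D y + D (A y) + 1))) (r y) = r y := fixNegSwap (hP4 y)
    have hcomb : ((A * B) ^ ((kf (σf y) - (kf y - D y)) + (-(D y + D (A y) + 1)))) (r y)
        = r y := by
      rw [← zappSwap, hs1, hfix2]
    calc σf (σf y) = ((A * B) ^ (kf (σf y) - D (σf y))) (A (r (σf y))) := rfl
      _ = ((A * B) ^ (kf (σf y) - D (A y))) (r y) := by rw [hrz, hDz, hAA]
      _ = ((A * B) ^ (1 + kf y)) (r y) := by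
          rw [show kf (σf y) - D (A y) =
            (1 + kf y) + ((kf (σf y) - (kf y - D y)) + (-(D y + D (A y) + 1))) from by ring,
            ← zappSwap, hcomb]
      _ = (A * B) (((A * B) ^ (kf y)) (r y)) := (zappOneSwap _ _ _).symm
      _ = (A * B) y := by rw [hkf]
  have hσAσ : ∀ y, σf (A (σf y)) = A y := by
    intro y
    have hσfy : σf y = ((A * B) ^ (kf y - D y)) (A (r y)) := rfl
    have hw2 : A (σf y) = ((A * B) ^ (-(kf y - D y))) (r y) := by
      rw [hσfy, conjZSwap' hA1 hB1, hAA]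
    have hSCw : (A * B).SameCycle (r y) (A (σf y)) := ⟨-(kf y - D y), hw2.symm⟩
    have hrw : r (A (σf y)) = r y := by rw [← (hP2 _ _ hSCw).1, hP5]
    have hDw : D (A (σf y)) = D y := by
      have h2 := (hP2 _ _ (hP1 y)).2
      rw [← (hP2 _ _ hSCw).2, ← h2]
    have hkww : ((A * B) ^ (kf (A (σf y)) + (kf y - D y))) (r y) = r y := by
      have h1 := (hkf (A (σf y))).trans hw2
      rw [hrw] at h1
      have h4 := congrArg (⇑((A * B) ^ (kf y - D y))) h1
      rw [zappSwap, zappSwap,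
        show (kf y - D y) + -(kf y - D y) = (0 : ℤ) from by ring, zpow_zero,
        Equiv.Perm.one_apply] at h4
      rw [show kf (A (σf y)) + (kf y - D y) = (kf y - D y) + kf (A (σf y)) from by ring]
      exact h4
    have hkww' : ((A * B) ^ (kf (A (σf y)) + (kf y - D y))) (A (r y)) = A (r y) :=
      fixASwap hA1 hB1 _ _ hkww
    calc σf (A (σf y))
        = ((A * B) ^ (kf (A (σf y)) - D (A (σf y)))) (A (r (A (σf y)))) := rfl
      _ = ((A * B) ^ (kf (A (σf y)) - D y)) (A (r y)) := by rw [hrw, hDw]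
      _ = ((A * B) ^ (-(kf y))) (A (r y)) := by
          rw [show kf (A (σf y)) - D y =
            (-(kf y)) + (kf (A (σf y)) + (kf y - D y)) from by ring, ← zappSwap, hkww']
      _ = A (((A * B) ^ (kf y)) (r y)) := (conjZSwap' hA1 hB1 _ _).symm
      _ = A y := by rw [hkf]
  have hinj : Function.Injective σf := by
    intro a b hab
    have h := congrArg σf hab
    rw [hσσ, hσσ] at h
    exact (A * B).injective h
  have hbij : Function.Bijective σf := Finite.injective_iff_bijective.mp hinj
  let σp : Equiv.Perm (Fin n) := Equiv.ofBijective σf hbij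
  have hσpa : ∀ y, σp y = σf y := fun y => rfl
  have hs2 : σp * σp = A * B := by
    apply Equiv.ext
    intro y
    rw [Equiv.Perm.mul_apply, hσpa, hσpa, hσσ]
  have hsAs : σp * A * σp = A := by
    apply Equiv.ext
    intro y
    rw [Equiv.Perm.mul_apply, Equiv.Perm.mul_apply, hσpa, hσpa, hσAσ]
  have hAinv : A⁻¹ = A := inv_eq_of_mul_eq_one_right hA1
  have hBinv : B⁻¹ = B := inv_eq_of_mul_eq_one_right hB1
  have hkey : σp * A = A * σp⁻¹ := eq_mul_inv_of_mul_eq hsAs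
  refine ⟨A * σp, ?_, ?_⟩
  · calc A * σp * A * (A * σp)⁻¹
        = A * (σp * A) * (σp⁻¹ * A⁻¹) := by group
      _ = A * (A * σp⁻¹) * (σp⁻¹ * A⁻¹) := by rw [hkey]
      _ = (A * A) * ((σp * σp)⁻¹ * A⁻¹) := by rw [mul_inv_rev]; group
      _ = (A * B)⁻¹ * A⁻¹ := by rw [hA1, hs2, one_mul]
      _ = B := by rw [mul_inv_rev, hAinv, hBinv, mul_assoc, hA1, mul_one]
  · have hBval : B = A * (σp * σp) := by rw [hs2, ← mul_assoc, hA1, one_mul]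
    have h3 : σp * B = A * σp := by
      calc σp * B = σp * (A * (σp * σp)) := by rw [← hBval]
        _ = (σp * A * σp) * σp := by group
        _ = A * σp := by rw [hsAs]
    calc A * σp * B * (A * σp)⁻¹
        = A * (σp * B) * (σp⁻¹ * A⁻¹) := by group
      _ = A * (A * σp) * (σp⁻¹ * A⁻¹) := by rw [h3]
      _ = (A * A) * (σp * σp⁻¹) * A⁻¹ := by group
      _ = A := by rw [hA1, mul_inv_cancel, one_mul, one_mul, hAinv]
end

section
/- Let n ≥ 1 and let M_n be the set of involutions of Fin n with at most one fixed point, with S_n acting by conjugation. If P and Q are M_n × M_n complex matrices each of which commutes with the permutation matrix of every π ∈ S_n (acting on M_n by conjugation), then P Q = Q P. In other words, the commutant algebra End_{S_n}(ℂ[M_n]) is commutative (the permutation module ℂ[M_n] is multiplicity free). -/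
namespace MatchSwap

open Equiv Function Finset

variable {n : ℕ}

/-- the product `B * A` -/
def cc (A B : Equiv.Perm (Fin n)) : Equiv.Perm (Fin n) := B * A

/-- orbit relation of the group generated by `A` and `B` -/
def Rel (A B : Equiv.Perm (Fin n)) (x y : Fin n) : Prop :=
  (∃ i : ℤ, ((cc A B) ^ i) x = y) ∨ (∃ i : ℤ, ((cc A B) ^ i) (A x) = y)

lemma rel_refl (A B : Equiv.Perm (Fin n)) (x : Fin n) : Rel A B x x :=
  Or.inl ⟨0, by simp⟩

open Classical in
/-- base point of an orbit -/
noncomputable def bp (A B : Equiv.Perm (Fin n)) (x : Fin n) : Fin n :=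
  (Finset.univ.filter (fun y => Rel A B x y)).min'
    ⟨x, by simp only [Finset.mem_filter, Finset.mem_univ, true_and]; exact rel_refl A B x⟩

/-- orbit contains an `A`-fixed point -/
abbrev K1 (A B : Equiv.Perm (Fin n)) (x : Fin n) : Prop :=
  ∃ a, A a = a ∧ ∃ j : ℤ, ((cc A B) ^ j) a = x

/-- orbit contains a `B`-fixed point -/
abbrev K2 (A B : Equiv.Perm (Fin n)) (x : Fin n) : Prop :=
  ∃ b, B b = b ∧ ∃ j : ℤ, ((cc A B) ^ j) b = x

noncomputable def sA (A B : Equiv.Perm (Fin n)) (a : Fin n) : ℤ :=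
  ((Function.minimalPeriod ⇑(cc A B) a + 1) / 2 : ℕ)

noncomputable def sB (A B : Equiv.Perm (Fin n)) (b : Fin n) : ℤ :=
  ((Function.minimalPeriod ⇑(cc A B) b - 1) / 2 : ℕ)

open Classical in
/-- fallback: free orbits -/
noncomputable def ffC (A B : Equiv.Perm (Fin n)) (x : Fin n) : Fin n :=
  if h3 : ∃ i : ℤ, ((cc A B) ^ i) (bp A B x) = x then
    ((cc A B) ^ (- h3.choose)) (bp A B x)
  else if h4 : ∃ i : ℤ, ((cc A B) ^ i) (A (bp A B x)) = x then
    ((cc A B) ^ (1 - h4.choose)) (A (bp A B x))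
  else x

open Classical in
/-- orbits containing a `B`-fixed point -/
noncomputable def ffB (A B : Equiv.Perm (Fin n)) (x : Fin n) : Fin n :=
  if hB : ∃ b, B b = b then
    if h2 : ∃ j : ℤ, ((cc A B) ^ j) hB.choose = x then
      ((cc A B) ^ (sB A B hB.choose - h2.choose)) hB.choose
    else ffC A B x
  else ffC A B x

open Classical in
/-- the swapping involution -/
noncomputable def ff (A B : Equiv.Perm (Fin n)) (x : Fin n) : Fin n :=
  if hA : ∃ a, A a = a then
    if h1 : ∃ j : ℤ, ((cc A B) ^ j) hA.choose = x then
      ((cc A B) ^ (sA A B hA.choose - h1.choose)) hA.choose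
    else ffB A B x
  else ffB A B x

section basic

variable {A B : Equiv.Perm (Fin n)}

lemma zap (c : Equiv.Perm (Fin n)) (i j : ℤ) (x : Fin n) :
    (c ^ (i + j)) x = (c ^ i) ((c ^ j) x) := by
  rw [zpow_add, Equiv.Perm.mul_apply]

lemma AA (hA2 : A * A = 1) (x : Fin n) : A (A x) = x := by
  have := Equiv.ext_iff.mp hA2 x
  simpa [Equiv.Perm.mul_apply] using this

lemma cc_apply (A B : Equiv.Perm (Fin n)) (x : Fin n) : cc A B x = B (A x) := rfl

lemma cc_A (hA2 : A * A = 1) (x : Fin n) : (cc A B) (A x) = B x := by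
  rw [cc_apply, AA hA2]

lemma B_cc (hB2 : B * B = 1) (x : Fin n) : B ((cc A B) x) = A x := by
  rw [cc_apply, AA hB2]

lemma Ac (hA2 : A * A = 1) (hB2 : B * B = 1) (i : ℤ) (x : Fin n) :
    A (((cc A B) ^ i) x) = ((cc A B) ^ (-i)) (A x) := by
  have hA' : A⁻¹ = A := inv_eq_of_mul_eq_one_right hA2
  have hB' : B⁻¹ = B := inv_eq_of_mul_eq_one_right hB2
  have key : A * (cc A B) * A⁻¹ = (cc A B)⁻¹ := by
    rw [hA']
    show A * (B * A) * A = (B * A)⁻¹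
    rw [mul_inv_rev, hA', hB']
    calc A * (B * A) * A = A * B * (A * A) := by group
      _ = A * B := by rw [hA2, mul_one]
  have key2 : A * (cc A B) ^ i = (cc A B) ^ (-i) * A := by
    have h : (A * cc A B * A⁻¹) ^ i = A * (cc A B) ^ i * A⁻¹ := conj_zpow
    rw [key, inv_zpow', hA'] at h
    rw [h, mul_assoc, hA2, mul_one]
  calc A (((cc A B) ^ i) x) = (A * (cc A B) ^ i) x := rfl
    _ = ((cc A B) ^ (-i) * A) x := by rw [key2]
    _ = ((cc A B) ^ (-i)) (A x) := rfl

lemma Bc (hA2 : A * A = 1) (hB2 : B * B = 1) (i : ℤ) (x : Fin n) :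
    B (((cc A B) ^ i) x) = ((cc A B) ^ (-i)) (B x) := by
  have hA' : A⁻¹ = A := inv_eq_of_mul_eq_one_right hA2
  have hB' : B⁻¹ = B := inv_eq_of_mul_eq_one_right hB2
  have key : B * (cc A B) * B⁻¹ = (cc A B)⁻¹ := by
    rw [hB']
    show B * (B * A) * B = (B * A)⁻¹
    rw [mul_inv_rev, hA', hB']
    calc B * (B * A) * B = (B * B) * (A * B) := by group
      _ = A * B := by rw [hB2, one_mul]
  have key2 : B * (cc A B) ^ i = (cc A B) ^ (-i) * B := by
    have h : (B * cc A B * B⁻¹) ^ i = B * (cc A B) ^ i * B⁻¹ := conj_zpow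
    rw [key, inv_zpow', hB'] at h
    rw [h, mul_assoc, hB2, mul_one]
  calc B (((cc A B) ^ i) x) = (B * (cc A B) ^ i) x := rfl
    _ = ((cc A B) ^ (-i) * B) x := by rw [key2]
    _ = ((cc A B) ^ (-i)) (B x) := rfl

lemma point_diff (c : Equiv.Perm (Fin n)) (r : Fin n) {p q : ℤ} (h : (c ^ p) r = (c ^ q) r) :
    (c ^ (q - p)) r = r := by
  have h2 := congrArg (⇑(c ^ (-p))) h
  rw [← zap, ← zap, show -p + p = (0 : ℤ) by ring, show -p + q = q - p by ring, zpow_zero] at h2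
  exact h2.symm

lemma exp_congr (c : Equiv.Perm (Fin n)) (a : Fin n) {d p q : ℤ} (hd : (c ^ d) a = a)
    (hpq : p = q + d) : (c ^ p) a = (c ^ q) a := by
  rw [hpq, zap, hd]

end basic

section rel

variable {A B : Equiv.Perm (Fin n)}

lemma rel_zpow (i : ℤ) (x : Fin n) : Rel A B x (((cc A B) ^ i) x) := Or.inl ⟨i, rfl⟩

lemma rel_A (x : Fin n) : Rel A B x (A x) := Or.inr ⟨0, by simp⟩

lemma rel_symm (hA2 : A * A = 1) (hB2 : B * B = 1) {x y : Fin n} (h : Rel A B x y) : Rel A B y x := by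
  rcases h with ⟨i, hi⟩ | ⟨i, hi⟩
  · refine Or.inl ⟨-i, ?_⟩
    rw [← hi, ← zap, show -i + i = (0 : ℤ) by ring, zpow_zero, Equiv.Perm.one_apply]
  · refine Or.inr ⟨i, ?_⟩
    rw [← hi, Ac hA2 hB2, AA hA2, ← zap, show i + -i = (0 : ℤ) by ring, zpow_zero,
      Equiv.Perm.one_apply]

lemma rel_trans (hA2 : A * A = 1) (hB2 : B * B = 1) {x y z : Fin n} (h1 : Rel A B x y) (h2 : Rel A B y z) : Rel A B x z := by
  rcases h1 with ⟨i, hi⟩ | ⟨i, hi⟩ <;> rcases h2 with ⟨j, hj⟩ | ⟨j, hj⟩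
  · exact Or.inl ⟨j + i, by rw [zap, hi, hj]⟩
  · refine Or.inr ⟨j + -i, ?_⟩
    rw [zap, ← hj]
    congr 1
    rw [← hi, Ac hA2 hB2]
  · refine Or.inr ⟨j + i, ?_⟩
    rw [zap, hi, hj]
  · refine Or.inl ⟨j + -i, ?_⟩
    rw [zap, ← hj]
    congr 1
    rw [← hi, Ac hA2 hB2, AA hA2]

lemma min'_congr {s t : Finset (Fin n)} (h : s = t) (hs : s.Nonempty) (ht : t.Nonempty) :
    s.min' hs = t.min' ht := by subst h; rfl

lemma bp_rel (x : Fin n) : Rel A B x (bp A B x) := by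
  classical
  have h := Finset.min'_mem (Finset.univ.filter (fun y => Rel A B x y))
    ⟨x, by simp only [Finset.mem_filter, Finset.mem_univ, true_and]; exact rel_refl A B x⟩
  simp only [Finset.mem_filter, Finset.mem_univ, true_and] at h
  exact h

lemma bp_congr (hA2 : A * A = 1) (hB2 : B * B = 1) {x y : Fin n} (h : Rel A B x y) : bp A B x = bp A B y := by
  classical
  unfold bp
  apply min'_congr
  apply Finset.ext
  intro z
  simp only [Finset.mem_filter, Finset.mem_univ, true_and]
  exact ⟨fun hz => rel_trans hA2 hB2 (rel_symm hA2 hB2 h) hz, fun hz => rel_trans hA2 hB2 h hz⟩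

end rel

section period

variable {A B : Equiv.Perm (Fin n)}

lemma zpow_nat_apply (c : Equiv.Perm (Fin n)) (m : ℕ) (x : Fin n) :
    (c ^ (m : ℤ)) x = (⇑c)^[m] x := by
  rw [zpow_natCast, ← Equiv.Perm.iterate_eq_pow]

lemma kper (c : Equiv.Perm (Fin n)) (y : Fin n) :
    (c ^ ((Function.minimalPeriod ⇑c y : ℕ) : ℤ)) y = y := by
  rw [zpow_nat_apply]
  exact Function.iterate_minimalPeriod

lemma kpos (c : Equiv.Perm (Fin n)) (y : Fin n) : 0 < Function.minimalPeriod ⇑c y := by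
  apply Function.minimalPeriod_pos_of_mem_periodicPts
  refine ⟨orderOf c, orderOf_pos c, ?_⟩
  show (⇑c)^[orderOf c] y = y
  rw [Equiv.Perm.iterate_eq_pow, pow_orderOf_eq_one]
  rfl

lemma kmin (c : Equiv.Perm (Fin n)) (y : Fin n) {m : ℕ} (hm : 0 < m)
    (h : (c ^ (m : ℤ)) y = y) : Function.minimalPeriod ⇑c y ≤ m := by
  apply Function.IsPeriodicPt.minimalPeriod_le hm
  show (⇑c)^[m] y = y
  rw [← zpow_nat_apply]
  exact h

lemma odd1 (hA2 : A * A = 1) (hB2 : B * B = 1)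
    (hA1 : ∀ x y, A x = x → A y = y → x = y) {a : Fin n} (ha : A a = a) :
    Odd (Function.minimalPeriod ⇑(cc A B) a) := by
  set k := Function.minimalPeriod ⇑(cc A B) a with hk
  rcases Nat.even_or_odd k with he | ho
  · exfalso
    obtain ⟨t, ht⟩ := he
    have hkpos : 0 < k := kpos _ _
    have htpos : 0 < t := by omega
    have hfix : A (((cc A B) ^ (t : ℤ)) a) = ((cc A B) ^ (t : ℤ)) a := by
      rw [Ac hA2 hB2, ha]
      calc ((cc A B) ^ (-(t : ℤ))) a = ((cc A B) ^ (-(t : ℤ))) (((cc A B) ^ ((k : ℕ) : ℤ)) a) := by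
            rw [kper]
        _ = ((cc A B) ^ (-(t : ℤ) + (k : ℤ))) a := (zap _ _ _ _).symm
        _ = ((cc A B) ^ (t : ℤ)) a := by
            rw [show (-(t : ℤ) + (k : ℤ)) = (t : ℤ) by omega]
    have heq : ((cc A B) ^ (t : ℤ)) a = a := hA1 _ _ hfix ha
    have := kmin (cc A B) a htpos heq
    omega
  · exact ho

lemma odd2 (hA2 : A * A = 1) (hB2 : B * B = 1)
    (hB1 : ∀ x y, B x = x → B y = y → x = y) {b : Fin n} (hb : B b = b) :
    Odd (Function.minimalPeriod ⇑(cc A B) b) := by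
  set k := Function.minimalPeriod ⇑(cc A B) b with hk
  rcases Nat.even_or_odd k with he | ho
  · exfalso
    obtain ⟨t, ht⟩ := he
    have hkpos : 0 < k := kpos _ _
    have htpos : 0 < t := by omega
    have hfix : B (((cc A B) ^ (t : ℤ)) b) = ((cc A B) ^ (t : ℤ)) b := by
      rw [Bc hA2 hB2, hb]
      calc ((cc A B) ^ (-(t : ℤ))) b = ((cc A B) ^ (-(t : ℤ))) (((cc A B) ^ ((k : ℕ) : ℤ)) b) := by
            rw [kper]
        _ = ((cc A B) ^ (-(t : ℤ) + (k : ℤ))) b := (zap _ _ _ _).symm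
        _ = ((cc A B) ^ (t : ℤ)) b := by
            rw [show (-(t : ℤ) + (k : ℤ)) = (t : ℤ) by omega]
    have heq : ((cc A B) ^ (t : ℤ)) b = b := hB1 _ _ hfix hb
    have := kmin (cc A B) b htpos heq
    omega
  · exact ho

lemma sA_per (hA2 : A * A = 1) (hB2 : B * B = 1)
    (hA1 : ∀ x y, A x = x → A y = y → x = y) {a : Fin n} (ha : A a = a) :
    ((cc A B) ^ (2 * sA A B a - 1)) a = a := by
  obtain ⟨m, hm⟩ := odd1 hA2 hB2 hA1 ha
  have h2 : 2 * sA A B a - 1 = ((Function.minimalPeriod ⇑(cc A B) a : ℕ) : ℤ) := by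
    rw [sA, hm]
    have : (2 * m + 1 + 1) / 2 = m + 1 := by omega
    rw [this]
    push_cast
    ring
  rw [h2]
  exact kper _ _

lemma sB_per (hA2 : A * A = 1) (hB2 : B * B = 1)
    (hB1 : ∀ x y, B x = x → B y = y → x = y) {b : Fin n} (hb : B b = b) :
    ((cc A B) ^ (2 * sB A B b + 1)) b = b := by
  obtain ⟨m, hm⟩ := odd2 hA2 hB2 hB1 hb
  have h2 : 2 * sB A B b + 1 = ((Function.minimalPeriod ⇑(cc A B) b : ℕ) : ℤ) := by
    rw [sB, hm]
    have : (2 * m + 1 - 1) / 2 = m := by omega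
    rw [this]
    push_cast
    ring
  rw [h2]
  exact kper _ _

end period

section eval

variable {A B : Equiv.Perm (Fin n)}

lemma ff1 (hA1 : ∀ x y, A x = x → A y = y → x = y) {x a : Fin n} (ha : A a = a) (j : ℤ)
    (hj : ((cc A B) ^ j) a = x) : ff A B x = ((cc A B) ^ (sA A B a - j)) a := by
  have hA : ∃ a, A a = a := ⟨a, ha⟩
  have hae : hA.choose = a := hA1 _ _ hA.choose_spec ha
  rw [ff, dif_pos hA, hae]
  have h1 : ∃ j' : ℤ, ((cc A B) ^ j') a = x := ⟨j, hj⟩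
  rw [dif_pos h1]
  exact exp_congr _ _ (point_diff _ _ (h1.choose_spec.trans hj.symm)) (by ring)

lemma ff_eq_ffB (hK1 : ¬ K1 A B x) : ff A B x = ffB A B x := by
  rw [ff]
  by_cases hA : ∃ a, A a = a
  · rw [dif_pos hA, dif_neg]
    rintro ⟨j, hj⟩
    exact hK1 ⟨hA.choose, hA.choose_spec, j, hj⟩
  · rw [dif_neg hA]

lemma ff2 (hB1 : ∀ x y, B x = x → B y = y → x = y) {x b : Fin n} (hK1 : ¬ K1 A B x)
    (hb : B b = b) (j : ℤ) (hj : ((cc A B) ^ j) b = x) :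
    ff A B x = ((cc A B) ^ (sB A B b - j)) b := by
  rw [ff_eq_ffB hK1, ffB]
  have hB : ∃ b, B b = b := ⟨b, hb⟩
  have hbe : hB.choose = b := hB1 _ _ hB.choose_spec hb
  rw [dif_pos hB, hbe]
  have h2 : ∃ j' : ℤ, ((cc A B) ^ j') b = x := ⟨j, hj⟩
  rw [dif_pos h2]
  exact exp_congr _ _ (point_diff _ _ (h2.choose_spec.trans hj.symm)) (by ring)

lemma ffB_eq_ffC (hB1 : ∀ x y, B x = x → B y = y → x = y) (hK2 : ¬ K2 A B x) :
    ffB A B x = ffC A B x := by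
  rw [ffB]
  by_cases hB : ∃ b, B b = b
  · rw [dif_pos hB, dif_neg]
    rintro ⟨j, hj⟩
    exact hK2 ⟨hB.choose, hB.choose_spec, j, hj⟩
  · rw [dif_neg hB]

lemma ff3L (hB1 : ∀ x y, B x = x → B y = y → x = y) {x : Fin n} (hK1 : ¬ K1 A B x)
    (hK2 : ¬ K2 A B x) (i : ℤ) (hi : ((cc A B) ^ i) (bp A B x) = x) :
    ff A B x = ((cc A B) ^ (-i)) (bp A B x) := by
  rw [ff_eq_ffB hK1, ffB_eq_ffC hB1 hK2, ffC]
  have h3 : ∃ i' : ℤ, ((cc A B) ^ i') (bp A B x) = x := ⟨i, hi⟩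
  rw [dif_pos h3]
  exact exp_congr _ _ (point_diff _ _ (h3.choose_spec.trans hi.symm)) (by ring)

lemma disj (hA2 : A * A = 1) (hB2 : B * B = 1) {x : Fin n} (hK1 : ¬ K1 A B x)
    (hK2 : ¬ K2 A B x) {t i : ℤ} (ht : ((cc A B) ^ t) (bp A B x) = x)
    (hi : ((cc A B) ^ i) (A (bp A B x)) = x) : False := by
  set r := bp A B x with hr
  have h : ((cc A B) ^ t) r = ((cc A B) ^ i) (A r) := ht.trans hi.symm
  have h2 : A (((cc A B) ^ t) r) = ((cc A B) ^ (-i)) r := by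
    rw [h, Ac hA2 hB2, AA hA2]
  rw [Ac hA2 hB2] at h2
  -- h2 : (cc^(-t)) (A r) = (cc^(-i)) r
  have h4 : A r = ((cc A B) ^ (t + -i)) r := by
    calc A r = ((cc A B) ^ (t + -t)) (A r) := by
          rw [show t + -t = (0 : ℤ) by ring, zpow_zero, Equiv.Perm.one_apply]
      _ = ((cc A B) ^ t) (((cc A B) ^ (-t)) (A r)) := zap _ _ _ _
      _ = ((cc A B) ^ t) (((cc A B) ^ (-i)) r) := by rw [h2]
      _ = ((cc A B) ^ (t + -i)) r := (zap _ _ _ _).symm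
  set m := t + -i with hm
  clear_value m
  rcases Int.even_or_odd m with ⟨u, hu⟩ | ⟨u, hu⟩
  · apply hK1
    refine ⟨((cc A B) ^ u) r, ?_, t - u, ?_⟩
    · rw [Ac hA2 hB2, h4, ← zap, show -u + m = u by omega]
    · rw [← zap, show t - u + u = t by ring]
      exact ht
  · apply hK2
    have hBr : B r = ((cc A B) ^ (m + 1)) r := by
      calc B r = (cc A B) (A r) := (cc_A hA2 r).symm
        _ = (cc A B) (((cc A B) ^ m) r) := by rw [h4]
        _ = ((cc A B) ^ ((1 : ℤ) + m)) r := by rw [zap, zpow_one]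
        _ = ((cc A B) ^ (m + 1)) r := by rw [add_comm]
    refine ⟨((cc A B) ^ (u + 1)) r, ?_, t - (u + 1), ?_⟩
    · rw [Bc hA2 hB2, hBr, ← zap, show -(u + 1) + (m + 1) = u + 1 by omega]
    · rw [← zap, show t - (u + 1) + (u + 1) = t by ring]
      exact ht

lemma ff3R (hA2 : A * A = 1) (hB2 : B * B = 1) (hB1 : ∀ x y, B x = x → B y = y → x = y)
    {x : Fin n} (hK1 : ¬ K1 A B x) (hK2 : ¬ K2 A B x) (i : ℤ)
    (hi : ((cc A B) ^ i) (A (bp A B x)) = x) :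
    ff A B x = ((cc A B) ^ (1 - i)) (A (bp A B x)) := by
  rw [ff_eq_ffB hK1, ffB_eq_ffC hB1 hK2, ffC]
  rw [dif_neg (by rintro ⟨t, ht⟩; exact disj hA2 hB2 hK1 hK2 ht hi)]
  have h4 : ∃ i' : ℤ, ((cc A B) ^ i') (A (bp A B x)) = x := ⟨i, hi⟩
  rw [dif_pos h4]
  exact exp_congr _ _ (point_diff _ _ (h4.choose_spec.trans hi.symm)) (by ring)

end eval

section invariance

variable {A B : Equiv.Perm (Fin n)}

lemma K1_A (hA2 : A * A = 1) (hB2 : B * B = 1) {x : Fin n} :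
    K1 A B (A x) ↔ K1 A B x := by
  constructor
  · rintro ⟨a, ha, j, hj⟩
    refine ⟨a, ha, -j, ?_⟩
    calc ((cc A B) ^ (-j)) a = ((cc A B) ^ (-j)) (A a) := by rw [ha]
      _ = A (((cc A B) ^ j) a) := (Ac hA2 hB2 j a).symm
      _ = A (A x) := by rw [hj]
      _ = x := AA hA2 x
  · rintro ⟨a, ha, j, hj⟩
    refine ⟨a, ha, -j, ?_⟩
    calc ((cc A B) ^ (-j)) a = ((cc A B) ^ (-j)) (A a) := by rw [ha]
      _ = A (((cc A B) ^ j) a) := (Ac hA2 hB2 j a).symm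
      _ = A x := by rw [hj]

lemma A_fixB (hA2 : A * A = 1) (hB2 : B * B = 1) {b : Fin n} (hb : B b = b) :
    A b = ((cc A B) ^ (-1 : ℤ)) b := by
  calc A b = B ((cc A B) b) := (B_cc hB2 b).symm
    _ = B (((cc A B) ^ (1 : ℤ)) b) := by rw [zpow_one]
    _ = ((cc A B) ^ (-1 : ℤ)) (B b) := Bc hA2 hB2 1 b
    _ = ((cc A B) ^ (-1 : ℤ)) b := by rw [hb]

lemma K2_A (hA2 : A * A = 1) (hB2 : B * B = 1) {x : Fin n} :
    K2 A B (A x) ↔ K2 A B x := by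
  constructor
  · rintro ⟨b, hb, j, hj⟩
    refine ⟨b, hb, -j + -1, ?_⟩
    calc ((cc A B) ^ (-j + -1)) b = ((cc A B) ^ (-j)) (((cc A B) ^ (-1 : ℤ)) b) := zap _ _ _ _
      _ = ((cc A B) ^ (-j)) (A b) := by rw [A_fixB hA2 hB2 hb]
      _ = A (((cc A B) ^ j) b) := (Ac hA2 hB2 j b).symm
      _ = A (A x) := by rw [hj]
      _ = x := AA hA2 x
  · rintro ⟨b, hb, j, hj⟩
    refine ⟨b, hb, -j + -1, ?_⟩
    calc ((cc A B) ^ (-j + -1)) b = ((cc A B) ^ (-j)) (((cc A B) ^ (-1 : ℤ)) b) := zap _ _ _ _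
      _ = ((cc A B) ^ (-j)) (A b) := by rw [A_fixB hA2 hB2 hb]
      _ = A (((cc A B) ^ j) b) := (Ac hA2 hB2 j b).symm
      _ = A x := by rw [hj]

lemma K1_zpow {x : Fin n} (t : ℤ) : K1 A B (((cc A B) ^ t) x) ↔ K1 A B x := by
  constructor
  · rintro ⟨a, ha, j, hj⟩
    refine ⟨a, ha, -t + j, ?_⟩
    rw [zap, hj, ← zap, show -t + t = (0 : ℤ) by ring, zpow_zero, Equiv.Perm.one_apply]
  · rintro ⟨a, ha, j, hj⟩
    exact ⟨a, ha, t + j, by rw [zap, hj]⟩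

lemma K2_zpow {x : Fin n} (t : ℤ) : K2 A B (((cc A B) ^ t) x) ↔ K2 A B x := by
  constructor
  · rintro ⟨b, hb, j, hj⟩
    refine ⟨b, hb, -t + j, ?_⟩
    rw [zap, hj, ← zap, show -t + t = (0 : ℤ) by ring, zpow_zero, Equiv.Perm.one_apply]
  · rintro ⟨b, hb, j, hj⟩
    exact ⟨b, hb, t + j, by rw [zap, hj]⟩

end invariance

section main

variable {A B : Equiv.Perm (Fin n)}

lemma ff_swap (hA2 : A * A = 1) (hB2 : B * B = 1)
    (hA1 : ∀ x y, A x = x → A y = y → x = y) (hB1 : ∀ x y, B x = x → B y = y → x = y)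
    (x : Fin n) : ff A B (A x) = B (ff A B x) := by
  by_cases h1 : K1 A B x
  · obtain ⟨a, ha, j, hj⟩ := h1
    have e1 : ff A B x = ((cc A B) ^ (sA A B a - j)) a := ff1 hA1 ha j hj
    have hax : ((cc A B) ^ (-j)) a = A x := by
      calc ((cc A B) ^ (-j)) a = ((cc A B) ^ (-j)) (A a) := by rw [ha]
        _ = A (((cc A B) ^ j) a) := (Ac hA2 hB2 j a).symm
        _ = A x := by rw [hj]
    have e2 : ff A B (A x) = ((cc A B) ^ (sA A B a - -j)) a := ff1 hA1 ha (-j) hax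
    rw [e1, e2, Bc hA2 hB2]
    have hBa : B a = ((cc A B) ^ (1 : ℤ)) a := by
      rw [zpow_one, ← cc_A hA2 a, ha]
    rw [hBa, ← zap]
    exact exp_congr _ _ (sA_per hA2 hB2 hA1 ha) (by ring)
  · by_cases h2 : K2 A B x
    · obtain ⟨b, hb, j, hj⟩ := h2
      have e1 : ff A B x = ((cc A B) ^ (sB A B b - j)) b := ff2 hB1 h1 hb j hj
      have hax : ((cc A B) ^ (-j + -1)) b = A x := by
        calc ((cc A B) ^ (-j + -1)) b
            = ((cc A B) ^ (-j)) (((cc A B) ^ (-1 : ℤ)) b) := zap _ _ _ _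
          _ = ((cc A B) ^ (-j)) (A b) := by rw [A_fixB hA2 hB2 hb]
          _ = A (((cc A B) ^ j) b) := (Ac hA2 hB2 j b).symm
          _ = A x := by rw [hj]
      have hK1' : ¬ K1 A B (A x) := fun h => h1 ((K1_A hA2 hB2).mp h)
      have e2 : ff A B (A x) = ((cc A B) ^ (sB A B b - (-j + -1))) b :=
        ff2 hB1 hK1' hb (-j + -1) hax
      rw [e1, e2, Bc hA2 hB2, hb]
      exact exp_congr _ _ (sB_per hA2 hB2 hB1 hb) (by ring)
    · have hrel : Rel A B (bp A B x) x := rel_symm hA2 hB2 (bp_rel x)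
      have hbpA : bp A B (A x) = bp A B x := bp_congr hA2 hB2 (rel_symm hA2 hB2 (rel_A x))
      have hK1' : ¬ K1 A B (A x) := fun h => h1 ((K1_A hA2 hB2).mp h)
      have hK2' : ¬ K2 A B (A x) := fun h => h2 ((K2_A hA2 hB2).mp h)
      rcases hrel with ⟨i, hi⟩ | ⟨i, hi⟩
      · have e1 : ff A B x = ((cc A B) ^ (-i)) (bp A B x) := ff3L hB1 h1 h2 i hi
        have hax : ((cc A B) ^ (-i)) (A (bp A B (A x))) = A x := by
          rw [hbpA]
          calc ((cc A B) ^ (-i)) (A (bp A B x)) = A (((cc A B) ^ i) (bp A B x)) :=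
                (Ac hA2 hB2 i _).symm
            _ = A x := by rw [hi]
        have e2 : ff A B (A x) = ((cc A B) ^ (1 - -i)) (A (bp A B (A x))) :=
          ff3R hA2 hB2 hB1 hK1' hK2' (-i) hax
        rw [e1, e2, hbpA, Bc hA2 hB2]
        have hBr : B (bp A B x) = ((cc A B) ^ (1 : ℤ)) (A (bp A B x)) := by
          rw [zpow_one, cc_A hA2]
        rw [hBr, ← zap, show -(-i) + 1 = 1 - -i by ring]
      · have e1 : ff A B x = ((cc A B) ^ (1 - i)) (A (bp A B x)) :=
          ff3R hA2 hB2 hB1 h1 h2 i hi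
        have hax : ((cc A B) ^ (-i)) (bp A B (A x)) = A x := by
          rw [hbpA]
          calc ((cc A B) ^ (-i)) (bp A B x)
              = ((cc A B) ^ (-i)) (A (A (bp A B x))) := by rw [AA hA2]
            _ = A (((cc A B) ^ i) (A (bp A B x))) := (Ac hA2 hB2 i _).symm
            _ = A x := by rw [hi]
        have e2 : ff A B (A x) = ((cc A B) ^ (-(-i))) (bp A B (A x)) :=
          ff3L hB1 hK1' hK2' (-i) hax
        rw [e1, e2, hbpA, Bc hA2 hB2]
        have hBA : B (A (bp A B x)) = ((cc A B) ^ (1 : ℤ)) (bp A B x) := by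
          rw [zpow_one]
          exact (cc_apply A B _).symm
        rw [hBA, ← zap, show -(1 - i) + 1 = -(-i) by ring]

lemma ff_invol (hA2 : A * A = 1) (hB2 : B * B = 1)
    (hA1 : ∀ x y, A x = x → A y = y → x = y) (hB1 : ∀ x y, B x = x → B y = y → x = y)
    (x : Fin n) : ff A B (ff A B x) = x := by
  by_cases h1 : K1 A B x
  · obtain ⟨a, ha, j, hj⟩ := h1
    have e1 : ff A B x = ((cc A B) ^ (sA A B a - j)) a := ff1 hA1 ha j hj
    have e2 : ff A B (ff A B x) = ((cc A B) ^ (sA A B a - (sA A B a - j))) a :=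
      ff1 hA1 ha (sA A B a - j) e1.symm
    rw [e2, show sA A B a - (sA A B a - j) = j by ring]
    exact hj
  · by_cases h2 : K2 A B x
    · obtain ⟨b, hb, j, hj⟩ := h2
      have e1 : ff A B x = ((cc A B) ^ (sB A B b - j)) b := ff2 hB1 h1 hb j hj
      have hbx : ((cc A B) ^ (-j)) x = b := by
        rw [← hj, ← zap, show -j + j = (0 : ℤ) by ring, zpow_zero, Equiv.Perm.one_apply]
      have hffx : ff A B x = ((cc A B) ^ (sB A B b - j + -j)) x := by
        calc ff A B x = ((cc A B) ^ (sB A B b - j)) b := e1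
          _ = ((cc A B) ^ (sB A B b - j)) (((cc A B) ^ (-j)) x) := by rw [hbx]
          _ = ((cc A B) ^ (sB A B b - j + -j)) x := (zap _ _ _ _).symm
      have hK1' : ¬ K1 A B (ff A B x) := by
        rw [hffx, K1_zpow]
        exact h1
      have e2 : ff A B (ff A B x) = ((cc A B) ^ (sB A B b - (sB A B b - j))) b :=
        ff2 hB1 hK1' hb (sB A B b - j) e1.symm
      rw [e2, show sB A B b - (sB A B b - j) = j by ring]
      exact hj
    · rcases rel_symm hA2 hB2 (bp_rel x) with ⟨i, hi⟩ | ⟨i, hi⟩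
      · have e1 : ff A B x = ((cc A B) ^ (-i)) (bp A B x) := ff3L hB1 h1 h2 i hi
        have hbx : ((cc A B) ^ (-i)) x = bp A B x := by
          have h' := congrArg (⇑((cc A B) ^ (-i))) hi
          rw [← zap, show -i + i = (0 : ℤ) by ring, zpow_zero, Equiv.Perm.one_apply] at h'
          exact h'.symm
        have hffx : ff A B x = ((cc A B) ^ (-i + -i)) x := by
          calc ff A B x = ((cc A B) ^ (-i)) (bp A B x) := e1
            _ = ((cc A B) ^ (-i)) (((cc A B) ^ (-i)) x) := by rw [hbx]
            _ = ((cc A B) ^ (-i + -i)) x := (zap _ _ _ _).symm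
        have hK1' : ¬ K1 A B (ff A B x) := by rw [hffx, K1_zpow]; exact h1
        have hK2' : ¬ K2 A B (ff A B x) := by rw [hffx, K2_zpow]; exact h2
        have hbp' : bp A B (ff A B x) = bp A B x := by
          rw [hffx]
          exact bp_congr hA2 hB2 (rel_symm hA2 hB2 (rel_zpow _ x))
        have e2 : ff A B (ff A B x) = ((cc A B) ^ (-(-i))) (bp A B (ff A B x)) :=
          ff3L hB1 hK1' hK2' (-i) (by rw [hbp']; exact e1.symm)
        rw [e2, hbp', show -(-i) = i by ring]
        exact hi
      · have e1 : ff A B x = ((cc A B) ^ (1 - i)) (A (bp A B x)) :=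
          ff3R hA2 hB2 hB1 h1 h2 i hi
        have hAbx : ((cc A B) ^ (-i)) x = A (bp A B x) := by
          have h' := congrArg (⇑((cc A B) ^ (-i))) hi
          rw [← zap, show -i + i = (0 : ℤ) by ring, zpow_zero, Equiv.Perm.one_apply] at h'
          exact h'.symm
        have hffx : ff A B x = ((cc A B) ^ (1 - i + -i)) x := by
          calc ff A B x = ((cc A B) ^ (1 - i)) (A (bp A B x)) := e1
            _ = ((cc A B) ^ (1 - i)) (((cc A B) ^ (-i)) x) := by rw [hAbx]
            _ = ((cc A B) ^ (1 - i + -i)) x := (zap _ _ _ _).symm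
        have hK1' : ¬ K1 A B (ff A B x) := by rw [hffx, K1_zpow]; exact h1
        have hK2' : ¬ K2 A B (ff A B x) := by rw [hffx, K2_zpow]; exact h2
        have hbp' : bp A B (ff A B x) = bp A B x := by
          rw [hffx]
          exact bp_congr hA2 hB2 (rel_symm hA2 hB2 (rel_zpow _ x))
        have e2 : ff A B (ff A B x) = ((cc A B) ^ (1 - (1 - i))) (A (bp A B (ff A B x))) :=
          ff3R hA2 hB2 hB1 hK1' hK2' (1 - i) (by rw [hbp']; exact e1.symm)
        rw [e2, hbp', show 1 - (1 - i) = i by ring]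
        exact hi

end main

theorem swap_exists (A B : Equiv.Perm (Fin n)) (hA2 : A * A = 1)
    (hA1 : ∀ x y, A x = x → A y = y → x = y) (hB2 : B * B = 1)
    (hB1 : ∀ x y, B x = x → B y = y → x = y) :
    ∃ π : Equiv.Perm (Fin n), π * A * π⁻¹ = B ∧ π * B * π⁻¹ = A := by
  have hinv : Function.Involutive (ff A B) := fun x => ff_invol hA2 hB2 hA1 hB1 x
  have hint : ∀ x, ff A B (A x) = B (ff A B x) := ff_swap hA2 hB2 hA1 hB1
  have hint2 : ∀ x, ff A B (B x) = A (ff A B x) := by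
    intro x
    have h := hint (ff A B x)
    rw [hinv x] at h
    have h2 := congrArg (ff A B) h
    rw [hinv (A (ff A B x))] at h2
    exact h2.symm
  refine ⟨hinv.toPerm _, ?_, ?_⟩
  · apply Equiv.ext
    intro x
    show (hinv.toPerm _) (A ((hinv.toPerm _)⁻¹ x)) = B x
    have hto : ∀ y, (hinv.toPerm (ff A B)) y = ff A B y := fun _ => rfl
    have htoi : ∀ y, (hinv.toPerm (ff A B))⁻¹ y = ff A B y := fun _ => rfl
    rw [hto, htoi, hint, hinv]
  · apply Equiv.ext
    intro x
    show (hinv.toPerm _) (B ((hinv.toPerm _)⁻¹ x)) = A x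
    have hto : ∀ y, (hinv.toPerm (ff A B)) y = ff A B y := fun _ => rfl
    have htoi : ∀ y, (hinv.toPerm (ff A B))⁻¹ y = ff A B y := fun _ => rfl
    rw [hto, htoi, hint2, hinv]

end MatchSwap

/-- Maximum matchings of the complete graph on `Fin n`: involutions of `Fin n`
with at most one fixed point. -/
abbrev MaxMatching (n : ℕ) :=
  {A : Equiv.Perm (Fin n) // A * A = 1 ∧ ∀ x y, A x = x → A y = y → x = y}

/-- The permutation matrix of `π ∈ S_n` for the conjugation action on maximum
matchings: the `(A,B)` entry is `1` if `π·B = B` is sent to `A`, else `0`. -/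
def permMat (n : ℕ) (π : Equiv.Perm (Fin n)) :
    Matrix (MaxMatching n) (MaxMatching n) ℂ :=
  Matrix.of fun A B => if π * B.1 * π⁻¹ = A.1 then 1 else 0

namespace MatchSwap

variable {n : ℕ}

/-- conjugation action on maximum matchings -/
def conjMM (π : Equiv.Perm (Fin n)) (M : MaxMatching n) : MaxMatching n :=
  ⟨π * M.1 * π⁻¹, by
    obtain ⟨h2, h1⟩ := M.2
    constructor
    · calc (π * M.1 * π⁻¹) * (π * M.1 * π⁻¹) = π * (M.1 * M.1) * π⁻¹ := by group
        _ = 1 := by rw [h2]; group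
    · intro x y hx hy
      have hx' : M.1 (π⁻¹ x) = π⁻¹ x := by
        have := congrArg (⇑π⁻¹) hx
        simpa [Equiv.Perm.mul_apply] using this
      have hy' : M.1 (π⁻¹ y) = π⁻¹ y := by
        have := congrArg (⇑π⁻¹) hy
        simpa [Equiv.Perm.mul_apply] using this
      have := h1 _ _ hx' hy'
      exact π⁻¹.injective.eq_iff.mp this⟩

lemma conjMM_inv_conjMM (π : Equiv.Perm (Fin n)) (M : MaxMatching n) :
    conjMM π⁻¹ (conjMM π M) = M := by
  apply Subtype.ext
  show π⁻¹ * (π * M.1 * π⁻¹) * π⁻¹⁻¹ = M.1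
  group

lemma entry_eq (π : Equiv.Perm (Fin n)) (P : Matrix (MaxMatching n) (MaxMatching n) ℂ)
    (hP : P * permMat n π = permMat n π * P) (X Y : MaxMatching n) :
    P X (conjMM π Y) = P (conjMM π⁻¹ X) Y := by
  have h : (P * permMat n π) X Y = (permMat n π * P) X Y := by rw [hP]
  rw [Matrix.mul_apply, Matrix.mul_apply] at h
  have hL : ∑ Z, P X Z * permMat n π Z Y = P X (conjMM π Y) := by
    have : ∀ Z : MaxMatching n, P X Z * permMat n π Z Y =
        if conjMM π Y = Z then P X Z else 0 := by
      intro Z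
      show P X Z * (if π * Y.1 * π⁻¹ = Z.1 then 1 else 0) = _
      have hcond : (π * Y.1 * π⁻¹ = Z.1) ↔ (conjMM π Y = Z) := by
        rw [Subtype.ext_iff]
        exact Iff.rfl
      by_cases hc : conjMM π Y = Z
      · rw [if_pos (hcond.mpr hc), if_pos hc, mul_one]
      · rw [if_neg (fun h' => hc (hcond.mp h')), if_neg hc, mul_zero]
    rw [Finset.sum_congr rfl (fun Z _ => this Z), Finset.sum_ite_eq]
    simp
  have hR : ∑ Z, permMat n π X Z * P Z Y = P (conjMM π⁻¹ X) Y := by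
    have : ∀ Z : MaxMatching n, permMat n π X Z * P Z Y =
        if conjMM π⁻¹ X = Z then P Z Y else 0 := by
      intro Z
      show (if π * Z.1 * π⁻¹ = X.1 then 1 else 0) * P Z Y = _
      have hcond : (π * Z.1 * π⁻¹ = X.1) ↔ (conjMM π⁻¹ X = Z) := by
        rw [Subtype.ext_iff]
        show _ ↔ π⁻¹ * X.1 * π⁻¹⁻¹ = Z.1
        constructor
        · intro h'
          rw [← h']
          group
        · intro h'
          rw [← h']
          group
      by_cases hc : conjMM π⁻¹ X = Z
      · rw [if_pos (hcond.mpr hc), if_pos hc, one_mul]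
      · rw [if_neg (fun h' => hc (hcond.mp h')), if_neg hc, zero_mul]
    rw [Finset.sum_congr rfl (fun Z _ => this Z), Finset.sum_ite_eq]
    simp
  rw [hL, hR] at h
  exact h

lemma symm_of_commut (P : Matrix (MaxMatching n) (MaxMatching n) ℂ)
    (hP : ∀ π : Equiv.Perm (Fin n), P * permMat n π = permMat n π * P)
    (X Y : MaxMatching n) : P X Y = P Y X := by
  obtain ⟨π, h1, h2⟩ := swap_exists X.1 Y.1 X.2.1 X.2.2 Y.2.1 Y.2.2
  have key : P (conjMM π X) (conjMM π Y) = P X Y := by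
    rw [entry_eq π P (hP π) (conjMM π X) Y, conjMM_inv_conjMM]
  have hX : conjMM π X = Y := Subtype.ext h1
  have hY : conjMM π Y = X := Subtype.ext h2
  rw [hX, hY] at key
  exact key.symm

end MatchSwap

/-- Any two matrices commuting with all the permutation matrices of the conjugation
action of `S_n` on maximum matchings commute with each other: the commutant
`End_{S_n}(ℂ[M_n])` is commutative, i.e. `ℂ[M_n]` is multiplicity free. -/
theorem commutant_matchings_commutative (n : ℕ) (hn : 1 ≤ n)
    (P Q : Matrix (MaxMatching n) (MaxMatching n) ℂ)
    (hP : ∀ π : Equiv.Perm (Fin n), P * permMat n π = permMat n π * P)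
    (hQ : ∀ π : Equiv.Perm (Fin n), Q * permMat n π = permMat n π * Q) :
    P * Q = Q * P := by
  have hPQ : ∀ π : Equiv.Perm (Fin n), (P * Q) * permMat n π = permMat n π * (P * Q) := by
    intro π
    rw [mul_assoc, hQ, ← mul_assoc, hP, mul_assoc]
  have sP := MatchSwap.symm_of_commut P hP
  have sQ := MatchSwap.symm_of_commut Q hQ
  have sPQ := MatchSwap.symm_of_commut (P * Q) hPQ
  apply Matrix.ext
  intro i j
  calc (P * Q) i j = (P * Q) j i := sPQ j i |>.symm
    _ = ∑ k, P j k * Q k i := Matrix.mul_apply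
    _ = ∑ k, Q i k * P k j := by
        apply Finset.sum_congr rfl
        intro k _
        rw [sP j k, sQ k i, mul_comm]
    _ = (Q * P) i j := (Matrix.mul_apply).symm
end

section
/- Let n ≥ 1 and let μ be a partition of 2n. For A, B ∈ M_{2n}, the number of permutations π of Fin (2n) of cycle type μ (i.e., whose multiset of orbit sizes on Fin (2n) equals the multiset of parts of μ) satisfying π A π⁻¹ = B depends only on the partition d(A,B). Writing m(μ, 2τ) for this common value when d(A,B) = 2τ (τ a partition of n), the M_{2n} × M_{2n} matrix K_μ with (A,B) entry equal to the number of π of cycle type μ with π A π⁻¹ = B satisfies K_μ = Σ_{τ ⊢ n} m(μ, 2τ) · N_{2τ}. -/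
/-!
An orbit of the group generated by two fixed-point-free involutions `A`, `B` is traversed by
the walk `x, Ax, BAx, ABAx, …`, which closes up after exactly `2r` steps, `r` being the period
of `x` under `BA`. So the orbit has size `2r` and, together with the action of `A` and `B`, is
determined by its size. Two such pairs with `d(A,B) = d(C,D)` are therefore simultaneously
conjugate by a permutation `σ` matching orbits of equal size, and `π ↦ σπσ⁻¹` is a bijection
between the permutations of cycle type `μ` taking `A` to `B` and those taking `C` to `D`.
Since the parts of `d(A,B)` are even and sum to `2n`, `d(A,B) = 2τ` for exactly one `τ ⊢ n`,
which gives the decomposition of `K_μ`.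
-/

/-- The multiset of cardinalities of the orbits of a subgroup of permutations
acting on a finite type. -/
noncomputable def orbitSizes {α : Type*} [Fintype α] (G : Subgroup (Equiv.Perm α)) :
    Multiset ℕ :=
  letI : Fintype (Quotient (MulAction.orbitRel G α)) := Fintype.ofFinite _
  (Finset.univ : Finset (Quotient (MulAction.orbitRel G α))).val.map
    fun q => Nat.card (MulAction.orbit G q.out)

/-- `d(A,B)`. -/
noncomputable def dMatch {N : ℕ} (A B : Equiv.Perm (Fin N)) : Multiset ℕ :=
  orbitSizes (Subgroup.closure {A, B})

/-- The multiset of sizes of the orbits of the cyclic group generated by a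
permutation (the cycle type, counting fixed points as parts equal to 1). -/
noncomputable def permOrbitSizes {N : ℕ} (π : Equiv.Perm (Fin N)) : Multiset ℕ :=
  orbitSizes (Subgroup.zpowers π)

/-- Doubling every part of a partition (as a multiset). -/
def twice (m : Multiset ℕ) : Multiset ℕ := m.map (fun i => 2 * i)

/-- Perfect matchings of the complete graph on `Fin N`. -/
abbrev PerfMatching (N : ℕ) := {A : Equiv.Perm (Fin N) // A * A = 1 ∧ ∀ x, A x ≠ x}

/-- The orbital basis element `N_{2μ}`. -/
noncomputable def Nmat (n : ℕ) (μ : Nat.Partition n) :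
    Matrix (PerfMatching (2 * n)) (PerfMatching (2 * n)) ℂ :=
  Matrix.of fun A B => if dMatch A.1 B.1 = twice μ.parts then 1 else 0

/-- The number of permutations of `Fin (2n)` of cycle type `μ ⊢ 2n` taking the perfect
matching `A` to the perfect matching `B`. -/
noncomputable def conjCount (n : ℕ) (μ : Nat.Partition (2 * n))
    (A B : PerfMatching (2 * n)) : ℕ :=
  Nat.card {π : Equiv.Perm (Fin (2 * n)) //
    permOrbitSizes π = μ.parts ∧ π * A.1 * π⁻¹ = B.1}

/-- The matrix `K_μ` whose `(A,B)` entry is the number of permutations of cycle type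
`μ` taking `A` to `B`. -/
noncomputable def Kmat (n : ℕ) (μ : Nat.Partition (2 * n)) :
    Matrix (PerfMatching (2 * n)) (PerfMatching (2 * n)) ℂ :=
  Matrix.of fun A B => (conjCount n μ A B : ℂ)


open Equiv MulAction Function

lemma exists_equiv_apply_eq_of_eq_iff_eq {X α β : Type*} {f : X → α} {g : X → β}
    (hf : Surjective f) (hg : Surjective g) (h : ∀ x y, f x = f y ↔ g x = g y) :
    ∃ σ : α ≃ β, ∀ x, σ (f x) = g x := by
  have hσ : ∀ x, g (surjInv hf (f x)) = g x := fun x =>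
    (h _ _).1 (surjInv_eq hf (f x))
  refine ⟨Equiv.ofBijective (g ∘ surjInv hf) ⟨fun a a' haa' => ?_, fun b => ?_⟩, hσ⟩
  · simpa only [surjInv_eq hf] using (h _ _).2 haa'
  · obtain ⟨x, rfl⟩ := hg b
    exact ⟨f x, hσ x⟩

lemma Equiv.Perm.conj_eq_of_intertwines {X α : Type*} {σ A C : Perm α} {f g : X → α}
    {s : X → X} (hf : Surjective f) (hσ : ∀ x, σ (f x) = g x)
    (hA : ∀ x, A (f x) = f (s x)) (hC : ∀ x, C (g x) = g (s x)) :
    σ * A * σ⁻¹ = C := by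
  rw [mul_inv_eq_iff_eq_mul]
  ext a
  obtain ⟨x, rfl⟩ := hf a
  simp only [Perm.mul_apply, hA, hσ, hC]

lemma exists_equiv_of_map_univ_eq {β γ : Type*} [Fintype β] [Fintype γ] {s : β → ℕ}
    {t : γ → ℕ} (h : Finset.univ.val.map s = Finset.univ.val.map t) :
    ∃ e : β ≃ γ, ∀ b, t (e b) = s b := by
  classical
  have hfib : ∀ v, Fintype.card {b // s b = v} = Fintype.card {c // t c = v} := by
    intro v
    simpa only [Fintype.card_subtype, Finset.card_def, Finset.filter_val, Multiset.count_map,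
      eq_comm] using congrArg (Multiset.count v) h
  exact ⟨Equiv.ofFiberEquiv fun v => Fintype.equivOfCardEq (hfib v),
    Equiv.ofFiberEquiv_map _⟩

lemma MulAction.zpow_smul_eq_zpow_smul_iff {G α : Type*} [Group G] [MulAction G α] {g : G}
    {a : α} {i j : ℤ} : g ^ i • a = g ^ j • a ↔ (period g a : ℤ) ∣ i - j := by
  rw [← zpow_smul_eq_iff_period_dvd, ← inv_smul_eq_iff, smul_smul, ← zpow_neg, ← zpow_add,
    neg_add_eq_sub]

lemma MulAction.mem_orbit_out_iff {G α : Type*} [Group G] [MulAction G α]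
    {q : orbitRel.Quotient G α} {a : α} :
    a ∈ orbit G q.out ↔ (⟦a⟧ : orbitRel.Quotient G α) = q := by
  rw [← orbitRel.Quotient.orbit_eq_orbit_out q Quotient.out_eq', orbitRel.Quotient.mem_orbit]

lemma orbit_map_conj {α : Type*} (G : Subgroup (Perm α)) (σ : Perm α) (x : α) :
    orbit (G.map (MulAut.conj σ).toMonoidHom) (σ x) = σ '' orbit G x := by
  ext y
  simp only [mem_orbit_iff, Subtype.exists, Subgroup.mem_map, Set.mem_image, Subgroup.mk_smul,
    Perm.smul_def, MulEquiv.coe_toMonoidHom, MulAut.conj_apply]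
  constructor
  · rintro ⟨_, ⟨g, hg, rfl⟩, rfl⟩
    exact ⟨g x, ⟨g, hg, rfl⟩, by simp⟩
  · rintro ⟨_, ⟨g, hg, rfl⟩, rfl⟩
    exact ⟨_, ⟨g, hg, rfl⟩, by simp⟩

section OrbitSizes

variable {α : Type*} [Fintype α]

lemma orbitSizes_eq (G : Subgroup (Perm α)) [Fintype (orbitRel.Quotient G α)] :
    orbitSizes G =
      Finset.univ.val.map fun q : orbitRel.Quotient G α => Nat.card (orbit G q.out) := by
  unfold orbitSizes
  congr!

lemma orbitSizes_sum (G : Subgroup (Perm α)) : (orbitSizes G).sum = Nat.card α := by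
  let _ := Fintype.ofFinite (orbitRel.Quotient G α)
  rw [orbitSizes_eq, Nat.card_congr (selfEquivSigmaOrbits G α), Nat.card_sigma]
  rfl

lemma orbitSizes_map_conj (G : Subgroup (Perm α)) (σ : Perm α) :
    orbitSizes (G.map (MulAut.conj σ).toMonoidHom) = orbitSizes G := by
  set G' := G.map (MulAut.conj σ).toMonoidHom
  let _ := Fintype.ofFinite (orbitRel.Quotient G α)
  let _ := Fintype.ofFinite (orbitRel.Quotient G' α)
  let e : orbitRel.Quotient G α ≃ orbitRel.Quotient G' α := Quotient.congr σ fun a b => by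
    rw [orbitRel_apply, orbitRel_apply, orbit_map_conj, σ.injective.mem_set_image]
  rw [orbitSizes_eq, orbitSizes_eq, ← Multiset.map_univ_val_equiv e, Multiset.map_map]
  refine Multiset.map_congr rfl fun q _ => ?_
  have hq : σ q.out ∈ orbit G' (e q).out := by
    rw [mem_orbit_out_iff, ← Quotient.congr_mk, Quotient.out_eq]
  rw [comp_apply, ← orbit_eq_iff.2 hq, orbit_map_conj, Nat.card_image_of_injective σ.injective]

end OrbitSizes

section Zigzag

variable {α : Type*} {A B : Perm α}

/-- The orbit of `x` under `⟨A, B⟩` traversed as `x, Ax, BAx, ABAx, …` (and backwards). -/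
def zigzag (A B : Perm α) (x : α) : ℤ × Bool → α
  | (i, false) => ((B * A) ^ i) x
  | (i, true) => A (((B * A) ^ i) x)

def zigzagFlip : ℤ × Bool → ℤ × Bool
  | (i, b) => (i, !b)

def zigzagStep : ℤ × Bool → ℤ × Bool
  | (i, false) => (i - 1, true)
  | (i, true) => (i + 1, false)

lemma zigzagFlip_surjective : Surjective zigzagFlip :=
  fun p => ⟨zigzagFlip p, by simp [zigzagFlip]⟩

lemma zigzagStep_surjective : Surjective zigzagStep
  | (i, false) => ⟨(i - 1, true), by simp [zigzagStep]⟩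
  | (i, true) => ⟨(i + 1, false), by simp [zigzagStep]⟩

lemma apply_zigzag_left (hAA : A * A = 1) (x : α) (p : ℤ × Bool) :
    A (zigzag A B x p) = zigzag A B x (zigzagFlip p) := by
  obtain ⟨i, _ | _⟩ := p
  · rfl
  · simp only [zigzag, zigzagFlip, Bool.not_true, ← Perm.mul_apply A A, hAA, Perm.one_apply]

lemma apply_zigzag_right (hBB : B * B = 1) (x : α) (p : ℤ × Bool) :
    B (zigzag A B x p) = zigzag A B x (zigzagStep p) := by
  obtain ⟨i, _ | _⟩ := p
  · have : B * (B * A) ^ i = A * (B * A) ^ (i - 1) := by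
      rw [← one_mul (A * _), ← hBB, mul_assoc, ← mul_assoc B A, ← zpow_one_add,
        add_sub_cancel]
    exact congrArg (· x) this
  · simp only [zigzag, zigzagStep, add_comm i 1, zpow_one_add, Perm.mul_apply]

open Pointwise in
lemma range_zigzag (hAA : A * A = 1) (hBB : B * B = 1) (x : α) :
    Set.range (zigzag A B x) = orbit (Subgroup.closure {A, B}) x := by
  have hA : A ∈ Subgroup.closure {A, B} := Subgroup.subset_closure (by simp)
  have hB : B ∈ Subgroup.closure {A, B} := Subgroup.subset_closure (by simp)
  apply subset_antisymm
  · rintro _ ⟨⟨i, _ | _⟩, rfl⟩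
    · exact ⟨⟨(B * A) ^ i, zpow_mem (mul_mem hB hA) i⟩, rfl⟩
    · exact ⟨⟨A * (B * A) ^ i, mul_mem hA (zpow_mem (mul_mem hB hA) i)⟩, rfl⟩
  · have hstab : Subgroup.closure {A, B} ≤ stabilizer (Perm α) (Set.range (zigzag A B x)) := by
      rw [Subgroup.closure_le, Set.insert_subset_iff, Set.singleton_subset_iff]
      constructor <;>
        rw [SetLike.mem_coe, mem_stabilizer_iff, ← Set.image_smul, ← Set.range_comp]
      · have : (fun y => A • y) ∘ zigzag A B x = zigzag A B x ∘ zigzagFlip :=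
          funext (apply_zigzag_left hAA x)
        rw [this, zigzagFlip_surjective.range_comp]
      · have : (fun y => B • y) ∘ zigzag A B x = zigzag A B x ∘ zigzagStep :=
          funext (apply_zigzag_right hBB x)
        rw [this, zigzagStep_surjective.range_comp]
    rintro _ ⟨⟨g, hg⟩, rfl⟩
    rw [← mem_stabilizer_iff.1 (hstab hg)]
    exact Set.smul_mem_smul_set ⟨(0, false), by simp [zigzag]⟩

lemma mul_zpow_mul_eq_zpow_neg_mul (hAA : A * A = 1) (hBB : B * B = 1) (t : ℤ) :
    A * (B * A) ^ t = (B * A) ^ (-t) * A := by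
  have h : SemiconjBy A (B * A) (B * A)⁻¹ := by
    rw [SemiconjBy, mul_inv_rev, inv_eq_of_mul_eq_one_right hAA,
      inv_eq_of_mul_eq_one_right hBB, mul_assoc]
  rw [zpow_neg, ← inv_zpow]
  exact h.zpow_right t

lemma zpow_mul_apply_ne_apply (hAA : A * A = 1) (hBB : B * B = 1) (hA : ∀ y, A y ≠ y)
    (hB : ∀ y, B y ≠ y) (k : ℤ) (y : α) : ((B * A) ^ k) y ≠ A y := by
  intro hk
  have hinv (t : ℤ) : A (((B * A) ^ t) y) = ((B * A) ^ (k - t)) y := by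
    rw [← Perm.mul_apply, mul_zpow_mul_eq_zpow_neg_mul hAA hBB, Perm.mul_apply, ← hk,
      ← Perm.mul_apply, ← zpow_add, neg_add_eq_sub]
  -- For `k = 2t`, `A` fixes `(BA)^t y`; for `k = 2t + 1`, `B` fixes `(BA)^(t+1) y`.
  obtain ⟨t, rfl | rfl⟩ := Int.even_or_odd' k
  · exact hA _ ((hinv t).trans (by rw [two_mul, add_sub_cancel_right]))
  · have hAt : A (((B * A) ^ t) y) = ((B * A) ^ (1 + t)) y := by
      rw [hinv]; ring_nf
    apply hB (((B * A) ^ (1 + t)) y)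
    rw [← hAt, ← Perm.mul_apply B A, ← Perm.mul_apply (B * A), ← zpow_one_add, hAt]

variable (hAA : A * A = 1) (hBB : B * B = 1) (hA : ∀ y, A y ≠ y) (hB : ∀ y, B y ≠ y)
include hAA hBB hA hB

lemma zigzag_eq_zigzag_iff (x : α) (p q : ℤ × Bool) :
    zigzag A B x p = zigzag A B x q ↔ p.2 = q.2 ∧ (period (B * A) x : ℤ) ∣ p.1 - q.1 := by
  have hsame (i j : ℤ) : ((B * A) ^ i) x = ((B * A) ^ j) x ↔ (period (B * A) x : ℤ) ∣ i - j :=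
    zpow_smul_eq_zpow_smul_iff (g := B * A) (a := x)
  have hmixed (i j : ℤ) : ((B * A) ^ i) x ≠ A (((B * A) ^ j) x) := fun h =>
    zpow_mul_apply_ne_apply hAA hBB hA hB (i - j) _
      (by rwa [← Perm.mul_apply, ← zpow_add, sub_add_cancel])
  obtain ⟨i, _ | _⟩ := p <;> obtain ⟨j, _ | _⟩ := q
  · simpa [zigzag] using hsame i j
  · simpa [zigzag] using hmixed i j
  · simpa [zigzag, eq_comm] using hmixed j i
  · simpa [zigzag] using hsame i j

lemma card_orbit_closure_pair (x : α) :
    Nat.card (orbit (Subgroup.closure {A, B}) x) = 2 * period (B * A) x := by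
  set r := period (B * A) x
  let toZMod : ℤ × Bool → ZMod r × Bool := Prod.map Int.cast id
  have hfib (p q : ℤ × Bool) : Set.rangeFactorization (zigzag A B x) p =
      Set.rangeFactorization (zigzag A B x) q ↔ toZMod p = toZMod q := by
    rw [Subtype.ext_iff, Set.rangeFactorization_coe, Set.rangeFactorization_coe,
      zigzag_eq_zigzag_iff hAA hBB hA hB, Prod.ext_iff, and_comm, ← Int.dvd_neg, neg_sub]
    exact Iff.and (ZMod.intCast_eq_intCast_iff_dvd_sub _ _ _).symm Iff.rfl
  obtain ⟨σ, -⟩ := exists_equiv_apply_eq_of_eq_iff_eq Set.rangeFactorization_surjective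
    (ZMod.intCast_surjective.prodMap surjective_id) hfib
  rw [← range_zigzag hAA hBB, Nat.card_congr σ, Nat.card_prod, Nat.card_zmod,
    Nat.card_eq_fintype_card (α := Bool), Fintype.card_bool, mul_comm]

lemma zigzag_out_eq_zigzag_out_iff (q q' : orbitRel.Quotient (Subgroup.closure {A, B}) α)
    (p p' : ℤ × Bool) :
    zigzag A B q.out p = zigzag A B q'.out p' ↔
      q = q' ∧ p.2 = p'.2 ∧ (period (B * A) q.out : ℤ) ∣ p.1 - p'.1 := by
  have hcls (q : orbitRel.Quotient (Subgroup.closure {A, B}) α) (p : ℤ × Bool) :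
      (⟦zigzag A B q.out p⟧ : orbitRel.Quotient _ α) = q :=
    mem_orbit_out_iff.1 (range_zigzag hAA hBB _ ▸ Set.mem_range_self p)
  constructor
  · intro h
    obtain rfl : q = q' := (hcls q p).symm.trans (h ▸ hcls q' p')
    exact ⟨rfl, (zigzag_eq_zigzag_iff hAA hBB hA hB _ p p').1 h⟩
  · rintro ⟨rfl, h⟩
    exact (zigzag_eq_zigzag_iff hAA hBB hA hB _ p p').2 h

omit hA hB in
lemma surjective_zigzag_out :
    Surjective fun x : orbitRel.Quotient (Subgroup.closure {A, B}) α × (ℤ × Bool) =>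
      zigzag A B x.1.out x.2 := by
  intro a
  obtain ⟨p, hp⟩ : a ∈ Set.range (zigzag A B (⟦a⟧ : orbitRel.Quotient _ α).out) := by
    rw [range_zigzag hAA hBB, mem_orbit_out_iff]
  exact ⟨(⟦a⟧, p), hp⟩

end Zigzag

theorem exists_conj_eq_of_orbitSizes_eq {α : Type*} [Fintype α] {A B C D : Perm α}
    (hAA : A * A = 1) (hA : ∀ y, A y ≠ y) (hBB : B * B = 1) (hB : ∀ y, B y ≠ y)
    (hCC : C * C = 1) (hC : ∀ y, C y ≠ y) (hDD : D * D = 1) (hD : ∀ y, D y ≠ y)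
    (hd : orbitSizes (Subgroup.closure {A, B}) = orbitSizes (Subgroup.closure {C, D})) :
    ∃ σ : Perm α, σ * A * σ⁻¹ = C ∧ σ * B * σ⁻¹ = D := by
  let _ := Fintype.ofFinite (orbitRel.Quotient (Subgroup.closure {A, B}) α)
  let _ := Fintype.ofFinite (orbitRel.Quotient (Subgroup.closure {C, D}) α)
  rw [orbitSizes_eq, orbitSizes_eq] at hd
  obtain ⟨e, he⟩ := exists_equiv_of_map_univ_eq hd
  have hperiod (q : orbitRel.Quotient (Subgroup.closure {A, B}) α) :
      period (D * C) (e q).out = period (B * A) q.out := by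
    have := he q
    rw [card_orbit_closure_pair hAA hBB hA hB, card_orbit_closure_pair hCC hDD hC hD] at this
    omega
  have hf := surjective_zigzag_out hAA hBB
  have hg := (surjective_zigzag_out hCC hDD).comp
    (e.surjective.prodMap (surjective_id (α := ℤ × Bool)))
  obtain ⟨σ, hσ⟩ := exists_equiv_apply_eq_of_eq_iff_eq hf hg fun x y => by
    simp only [comp_apply, Prod.map_fst, Prod.map_snd, id_eq,
      zigzag_out_eq_zigzag_out_iff hAA hBB hA hB, zigzag_out_eq_zigzag_out_iff hCC hDD hC hD,
      e.apply_eq_iff_eq, hperiod]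
  refine ⟨σ, Perm.conj_eq_of_intertwines hf hσ (s := Prod.map id zigzagFlip) ?_ ?_,
    Perm.conj_eq_of_intertwines hf hσ (s := Prod.map id zigzagStep) ?_ ?_⟩ <;>
    intro x
  exacts [apply_zigzag_left hAA _ _, apply_zigzag_left hCC _ _, apply_zigzag_right hBB _ _,
    apply_zigzag_right hDD _ _]

lemma permOrbitSizes_conj {N : ℕ} (σ π : Perm (Fin N)) :
    permOrbitSizes (σ * π * σ⁻¹) = permOrbitSizes π := by
  rw [permOrbitSizes, ← MulAut.conj_apply, ← MulEquiv.coe_toMonoidHom, ← MonoidHom.map_zpowers,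
    orbitSizes_map_conj, permOrbitSizes]

lemma conjCount_eq_of_conj {n : ℕ} (μ : Nat.Partition (2 * n)) {A B C D : PerfMatching (2 * n)}
    {σ : Perm (Fin (2 * n))} (hAC : σ * A.1 * σ⁻¹ = C.1) (hBD : σ * B.1 * σ⁻¹ = D.1) :
    conjCount n μ A B = conjCount n μ C D := by
  refine Nat.card_congr ((MulAut.conj σ).toEquiv.subtypeEquiv fun π => ?_)
  simp only [MulEquiv.toEquiv_eq_coe, MulEquiv.coe_toEquiv, MulAut.conj_apply, ← hAC, ← hBD,
    permOrbitSizes_conj]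
  rw [show σ * π * σ⁻¹ * (σ * A.1 * σ⁻¹) * (σ * π * σ⁻¹)⁻¹ = σ * (π * A.1 * π⁻¹) * σ⁻¹ by group,
    mul_left_inj, mul_right_inj]

lemma exists_partition_twice_eq {n : ℕ} {m : Multiset ℕ} (hm : ∀ v ∈ m, 0 < v ∧ Even v)
    (hsum : m.sum = 2 * n) : ∃ τ : Nat.Partition n, twice τ.parts = m := by
  have htwice : twice (m.map (· / 2)) = m := by
    rw [twice, Multiset.map_map]
    conv_rhs => rw [← Multiset.map_id m]
    exact Multiset.map_congr rfl fun v hv => Nat.two_mul_div_two_of_even (hm v hv).2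
  refine ⟨⟨m.map (· / 2), ?_, ?_⟩, htwice⟩
  · simp only [Multiset.mem_map]
    rintro _ ⟨v, hv, rfl⟩
    obtain ⟨hpos, k, rfl⟩ := hm v hv
    omega
  · have := congrArg Multiset.sum htwice
    rw [twice, Multiset.sum_map_mul_left, Multiset.map_id'] at this
    omega

lemma twice_injective : Injective twice :=
  Multiset.map_injective (mul_right_injective₀ two_ne_zero)

lemma exists_dMatch_eq_twice {n : ℕ} (A B : PerfMatching (2 * n)) :
    ∃ τ : Nat.Partition n, twice τ.parts = dMatch A.1 B.1 := by
  let _ := Fintype.ofFinite (orbitRel.Quotient (Subgroup.closure {A.1, B.1}) (Fin (2 * n)))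
  refine exists_partition_twice_eq ?_ ?_
  · rw [dMatch, orbitSizes_eq]
    simp only [Multiset.mem_map]
    rintro _ ⟨q, -, rfl⟩
    rw [card_orbit_closure_pair A.2.1 B.2.1 A.2.2 B.2.2]
    exact ⟨by simpa using period_pos_of_orderOf_pos (orderOf_pos _) _, even_two_mul _⟩
  · rw [dMatch, orbitSizes_sum, Nat.card_eq_fintype_card, Fintype.card_fin]

theorem conjCount_depends_only_on_d_and_Kmat_decomp_general (n : ℕ)
    (μ : Nat.Partition (2 * n)) :
    (∀ A B C D : PerfMatching (2 * n),
      dMatch A.1 B.1 = dMatch C.1 D.1 → conjCount n μ A B = conjCount n μ C D) ∧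
    (∀ m : Nat.Partition n → ℕ,
      (∀ (τ : Nat.Partition n) (A B : PerfMatching (2 * n)),
        dMatch A.1 B.1 = twice τ.parts → conjCount n μ A B = m τ) →
      Kmat n μ = ∑ τ : Nat.Partition n, (m τ : ℂ) • Nmat n τ) := by
  refine ⟨fun A B C D hd => ?_, fun m hm => ?_⟩
  · obtain ⟨σ, hAC, hBD⟩ := exists_conj_eq_of_orbitSizes_eq A.2.1 A.2.2 B.2.1 B.2.2
      C.2.1 C.2.2 D.2.1 D.2.2 hd
    exact conjCount_eq_of_conj μ hAC hBD
  · ext A B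
    obtain ⟨τ₀, hτ₀⟩ := exists_dMatch_eq_twice A B
    have hd (τ : Nat.Partition n) : dMatch A.1 B.1 = twice τ.parts ↔ τ₀ = τ := by
      rw [← hτ₀, twice_injective.eq_iff, Nat.Partition.ext_iff]
    simp [Kmat, Nmat, Matrix.sum_apply, hd, hm τ₀ A B hτ₀.symm]

/-- The number of permutations of cycle type `μ ⊢ 2n` taking `A` to `B` depends only on
`d(A,B)`; and denoting by `m(μ,2τ)` the common value when `d(A,B) = 2τ`, the matrix
`K_μ` decomposes as `Σ_{τ ⊢ n} m(μ,2τ) · N_{2τ}`. -/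
theorem conjCount_depends_only_on_d_and_Kmat_decomp (n : ℕ) (hn : 1 ≤ n)
    (μ : Nat.Partition (2 * n)) :
    (∀ A B C D : PerfMatching (2 * n),
      dMatch A.1 B.1 = dMatch C.1 D.1 → conjCount n μ A B = conjCount n μ C D) ∧
    (∀ m : Nat.Partition n → ℕ,
      (∀ (τ : Nat.Partition n) (A B : PerfMatching (2 * n)),
        dMatch A.1 B.1 = twice τ.parts → conjCount n μ A B = m τ) →
      Kmat n μ = ∑ τ : Nat.Partition n, (m τ : ℂ) • Nmat n τ) :=
  conjCount_depends_only_on_d_and_Kmat_decomp_general n μ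
end

section
/- Let μ be a partition with all parts ≥ 2, |μ| = k, ℓ(μ) parts, and let n ≥ k. Let I and A be perfect matchings of Fin (2n) with d(I,A) = 2(μ, 1^{n−k}), where (μ, 1^{n−k}) is the partition of n obtained from μ by appending n−k parts equal to 1. Then the number of permutations π of Fin (2n) of cycle type (μ, 1^{2n−k}) (i.e., whose nontrivial orbit sizes on Fin (2n) form the multiset of parts of μ) satisfying π I π⁻¹ = A is exactly 2^{ℓ(μ)}. -/
/-!
Write `σ = A * I`. Since `I σ I⁻¹ = σ⁻¹` and neither `I` nor `A` has fixed points, no power of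
`σ` sends `x` to `I x`, so every orbit of `⟨I, A⟩` is the disjoint union of two `σ`-cycles `C`
and `I C` of equal length, and `d(I, A)` is twice the multiset of these lengths, one per orbit.
If `π I π⁻¹ = A`, every fixed point `x` of `π` moved by `σ` satisfies `π (I x) = A x ≠ I x`.
The cycle type of `π` and `d(I, A)` give `2 |supp π| = |supp σ|`, so `I` maps these points onto
the support of `π`; hence `π = σ` on its support, which consists of exactly one of `C`, `I C` for
each orbit of size `≥ 4`. Conversely, for each such choice of cycles, the permutation acting as `σ`
on them and trivially elsewhere conjugates `I` to `A`, and its nontrivial cycle lengths are `μ`;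
there are `2 ^ ℓ(μ)` choices.
-/

open Equiv Equiv.Perm MulAction Subgroup Finset
open scoped Pointwise

section Twice

theorem count_one_eq_zero_of_two_le {μ : Multiset ℕ} (hμ : ∀ i ∈ μ, 2 ≤ i) : μ.count 1 = 0 :=
  Multiset.count_eq_zero.2 fun h => by have := hμ 1 h; omega

theorem count_two_mul_twice (s : Multiset ℕ) (m : ℕ) : (twice s).count (2 * m) = s.count m :=
  Multiset.count_map_eq_count' _ _ (mul_right_injective₀ two_ne_zero) m

theorem card_filter_ne_two_twice {μ : Multiset ℕ} (hμ : ∀ i ∈ μ, 2 ≤ i) (r : ℕ) :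
    Multiset.card ((twice (μ + Multiset.replicate r 1)).filter (· ≠ 2)) = Multiset.card μ := by
  rw [twice, Multiset.map_add, Multiset.filter_add, Multiset.map_replicate,
    Multiset.filter_eq_self.2 fun a ha => ?_, Multiset.filter_eq_nil.2 fun a ha => ?_, add_zero,
    Multiset.card_map]
  · simp [Multiset.eq_of_mem_replicate ha]
  · obtain ⟨i, hi, rfl⟩ := Multiset.mem_map.1 ha
    have := hμ i hi
    omega

end Twice

section OrbitSizes

variable {α : Type*}

theorem mem_orbit_zpowers_iff {f : Perm α} {x y : α} :
    y ∈ orbit (zpowers f) x ↔ f.SameCycle x y := by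
  simp only [mem_orbit_iff, SameCycle, Subgroup.exists_zpowers]
  rfl

theorem card_orbit_zpowers_eq_one_iff {f : Perm α} {x : α} :
    Nat.card (orbit (zpowers f) x) = 1 ↔ f x = x := by
  rw [Nat.card_coe_set_eq, Set.ncard_eq_one]
  constructor
  · rintro ⟨a, ha⟩
    have hx : x ∈ orbit (zpowers f) x := mem_orbit_self x
    have hfx : f x ∈ orbit (zpowers f) x := mem_orbit_zpowers_iff.2 (SameCycle.refl f x).apply_right
    rw [ha] at hx hfx
    exact hfx.trans hx.symm
  · intro h
    exact ⟨x, Set.ext fun y => mem_orbit_zpowers_iff.trans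
      ⟨fun hy => (hy.eq_of_left h).symm, fun hy => hy ▸ SameCycle.refl f x⟩⟩

variable [Fintype α]

theorem sum_filter_orbitSizes (G : Subgroup (Perm α)) (p : ℕ → Prop) [DecidablePred p] :
    ((orbitSizes G).filter p).sum = #{x : α | p (Nat.card (orbit G x))} := by
  classical
  let _ : Fintype (orbitRel.Quotient G α) := Fintype.ofFinite _
  set ℓ : orbitRel.Quotient G α → ℕ := fun q => Nat.card (orbit G q.out)
  have hℓ : ∀ x : α, Nat.card (orbit G x) = ℓ ⟦x⟧ := fun x => by
    simp only [ℓ]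
    rw [orbit_eq_iff.2 (orbitRel_apply.1 (Quotient.mk_out x))]
  have hfiber : ∀ q,
      #{x : α | p (Nat.card (orbit G x)) ∧ ⟦x⟧ = q} = if p (ℓ q) then ℓ q else 0 := fun q => by
    have hmem : ∀ x, ⟦x⟧ = q ↔ x ∈ orbit G q.out := fun x => by
      conv_lhs => rw [← Quotient.out_eq q, Quotient.eq, orbitRel_apply]
    split_ifs with hq
    · rw [show ℓ q = _ from Nat.card_eq_fintype_card, Fintype.card_subtype]
      refine congrArg card (filter_congr fun x _ => ?_)
      rw [← hmem, and_iff_right_iff_imp]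
      rintro rfl
      rwa [hℓ]
    · refine card_eq_zero.2 (filter_false_of_mem fun x _ => ?_)
      rintro ⟨hx, rfl⟩
      exact hq (hℓ x ▸ hx)
  calc ((orbitSizes G).filter p).sum = ∑ q with p (ℓ q), ℓ q := by
        rw [orbitSizes, Multiset.filter_map, Finset.sum, Finset.filter_val]; rfl
    _ = ∑ q, #{x : α | p (Nat.card (orbit G x)) ∧ ⟦x⟧ = q} := by
        rw [Finset.sum_filter]; exact sum_congr rfl fun q _ => (hfiber q).symm
    _ = #{x : α | p (Nat.card (orbit G x))} := by
        rw [card_eq_sum_card_fiberwise (f := fun x => (⟦x⟧ : orbitRel.Quotient G α))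
          (t := univ) (fun _ _ => mem_univ _)]
        simp only [filter_filter]

theorem count_orbitSizes_mul (G : Subgroup (Perm α)) (m : ℕ) :
    (orbitSizes G).count m * m = #{x : α | Nat.card (orbit G x) = m} := by
  rw [← sum_filter_orbitSizes G (· = m), Multiset.filter_eq', Multiset.sum_replicate, smul_eq_mul]

theorem sum_orbitSizes (G : Subgroup (Perm α)) : (orbitSizes G).sum = Fintype.card α := by
  simpa using sum_filter_orbitSizes G fun _ => True

theorem card_eq_of_orbitSizes_eq_twice {G : Subgroup (Perm α)} {s : Multiset ℕ}
    (hG : orbitSizes G = twice s) : Fintype.card α = 2 * s.sum := by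
  rw [← sum_orbitSizes G, hG, twice, Multiset.sum_map_mul_left, Multiset.map_id']

theorem count_zero_orbitSizes (G : Subgroup (Perm α)) : (orbitSizes G).count 0 = 0 := by
  refine Multiset.count_eq_zero.2 fun h => ?_
  obtain ⟨q, -, hq⟩ := Multiset.mem_map.1 h
  have : Nonempty (orbit G q.out) := ⟨⟨_, mem_orbit_self _⟩⟩
  exact Nat.card_pos.ne' hq

theorem card_filter_orbitSizes (G : Subgroup (Perm α)) (p : ℕ → Prop) [DecidablePred p] :
    Multiset.card ((orbitSizes G).filter p) =
      Nat.card {q : orbitRel.Quotient G α // p (Nat.card (orbit G q.out))} := by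
  let _ : Fintype (orbitRel.Quotient G α) := Fintype.ofFinite _
  rw [orbitSizes, Multiset.filter_map, Multiset.card_map, Nat.card_eq_fintype_card,
    Fintype.card_subtype, card_def, filter_val]
  rfl

theorem card_support_add_count_one_orbitSizes [DecidableEq α] (f : Perm α) :
    #f.support + (orbitSizes (zpowers f)).count 1 = Fintype.card α := by
  rw [← mul_one (Multiset.count _ _), count_orbitSizes_mul]
  simp_rw [card_orbit_zpowers_eq_one_iff]
  rw [add_comm]
  exact card_filter_add_card_filter_not _

end OrbitSizes

section Dihedral

variable {α : Type*} {I A : Perm α}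

structure IsPerfectMatching (I : Perm α) : Prop where
  mul_self : I * I = 1
  apply_ne : ∀ x, I x ≠ x

theorem apply_apply_of_mul_self_eq_one (hI : I * I = 1) (x : α) : I (I x) = x := by
  rw [← Perm.mul_apply, hI, Perm.one_apply]

theorem conj_mul_eq_inv (hI : I * I = 1) (hA : A * A = 1) : I * (A * I) * I⁻¹ = (A * I)⁻¹ := by
  rw [inv_eq_of_mul_eq_one_right hI, mul_inv_rev, inv_eq_of_mul_eq_one_right hI,
    inv_eq_of_mul_eq_one_right hA, mul_assoc, mul_assoc, hI, mul_one]

theorem apply_zpow_apply (hI : I * I = 1) (hA : A * A = 1) (t : ℤ) (x : α) :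
    I (((A * I) ^ t) x) = ((A * I) ^ (-t)) (I x) := by
  have h : I * (A * I) ^ t * I⁻¹ = (A * I) ^ (-t) := by
    rw [← conj_zpow, conj_mul_eq_inv hI hA, inv_zpow']
  rw [← h]
  simp

theorem sameCycle_apply_apply_iff (hI : I * I = 1) (hA : A * A = 1) {x y : α} :
    (A * I).SameCycle (I x) (I y) ↔ (A * I).SameCycle x y := by
  rw [← sameCycle_inv, ← conj_mul_eq_inv hI hA, sameCycle_conj]
  simp

theorem mul_apply_eq_self_iff (hA : A * A = 1) {x : α} : (A * I) x = x ↔ A x = I x := by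
  rw [Perm.mul_apply, eq_comm, ← Perm.inv_eq_iff_eq, inv_eq_of_mul_eq_one_right hA]

theorem mem_orbit_closure_iff (hI : I * I = 1) (hA : A * A = 1) {x y : α} :
    y ∈ orbit (closure {I, A}) x ↔ (A * I).SameCycle x y ∨ (A * I).SameCycle (I x) y := by
  have hσ : A * I ∈ closure {I, A} := mul_mem (subset_closure (by simp)) (subset_closure (by simp))
  constructor
  · rintro ⟨g, rfl⟩
    let U : Set α := {y | (A * I).SameCycle x y ∨ (A * I).SameCycle (I x) y}
    have hIU : ∀ z, I z ∈ U ↔ z ∈ U := fun z => by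
      have h : (A * I).SameCycle x (I z) ↔ (A * I).SameCycle (I x) z := by
        simpa [apply_apply_of_mul_self_eq_one hI] using
          sameCycle_apply_apply_iff hI hA (x := I x) (y := z)
      simp only [U, Set.mem_ofPred_eq]
      rw [h, sameCycle_apply_apply_iff hI hA, or_comm]
    have hle : closure {I, A} ≤ stabilizer (Perm α) U := by
      rw [closure_le, Set.insert_subset_iff, Set.singleton_subset_iff]
      refine ⟨?_, ?_⟩ <;> ext z <;> rw [Set.mem_smul_set_iff_inv_smul_mem, Perm.smul_def]
      · rw [inv_eq_of_mul_eq_one_right hI, hIU]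
      · have hAz : A z = (A * I) (I z) := by simp [apply_apply_of_mul_self_eq_one hI]
        rw [inv_eq_of_mul_eq_one_right hA, hAz, ← hIU z]
        simp only [U, Set.mem_ofPred_eq, sameCycle_apply_right]
    have hg : g • U = U := mem_stabilizer_iff.1 (hle g.2)
    show g • x ∈ U
    rw [← hg]
    exact Set.smul_mem_smul_set (Or.inl (SameCycle.refl _ x))
  · rintro (⟨t, rfl⟩ | ⟨t, rfl⟩)
    · exact ⟨⟨(A * I) ^ t, zpow_mem hσ t⟩, rfl⟩
    · exact ⟨⟨(A * I) ^ t * I, mul_mem (zpow_mem hσ t) (subset_closure (by simp))⟩, rfl⟩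

theorem orbit_zpowers_apply (hI : I * I = 1) (hA : A * A = 1) (x : α) :
    orbit (zpowers (A * I)) (I x) = I '' orbit (zpowers (A * I)) x := by
  ext y
  rw [Set.mem_image_equiv, ← Perm.inv_def, inv_eq_of_mul_eq_one_right hI, mem_orbit_zpowers_iff,
    mem_orbit_zpowers_iff, ← sameCycle_apply_apply_iff hI hA (y := I y),
    apply_apply_of_mul_self_eq_one hI]

theorem card_orbit_zpowers_apply (hI : I * I = 1) (hA : A * A = 1) (x : α) :
    Nat.card (orbit (zpowers (A * I)) (I x)) = Nat.card (orbit (zpowers (A * I)) x) := by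
  rw [orbit_zpowers_apply hI hA, Nat.card_image_of_injective I.injective]

theorem mul_apply_apply_eq_self_iff (hI : I * I = 1) (hA : A * A = 1) {x : α} :
    (A * I) (I x) = I x ↔ (A * I) x = x := by
  rw [← card_orbit_zpowers_eq_one_iff, ← card_orbit_zpowers_eq_one_iff,
    card_orbit_zpowers_apply hI hA]

/- If `(A * I) ^ t` sends `x` to `I x`, then `I` fixes `(A * I) ^ s x` when `t = 2 s`, and `A`
fixes `(A * I) ^ (s + 1) x` when `t = 2 s + 1`. -/
theorem not_sameCycle_apply (hI : IsPerfectMatching I) (hA : IsPerfectMatching A) (x : α) :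
    ¬(A * I).SameCycle x (I x) := by
  rintro ⟨t, ht⟩
  have hIσ := apply_zpow_apply hI.mul_self hA.mul_self
  obtain ⟨s, rfl | rfl⟩ := Int.even_or_odd' t
  · apply hI.apply_ne (((A * I) ^ s) x)
    rw [hIσ, ← ht, ← Perm.mul_apply, ← zpow_add]
    congr 2
    ring
  · have hstep : ((A * I) ^ (s + 1)) x = A (I (((A * I) ^ s) x)) := by
      rw [add_comm, zpow_one_add, Perm.mul_apply, Perm.mul_apply]
    apply hA.apply_ne (((A * I) ^ (s + 1)) x)
    calc A (((A * I) ^ (s + 1)) x) = I (((A * I) ^ s) x) := by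
          rw [hstep, apply_apply_of_mul_self_eq_one hA.mul_self]
      _ = ((A * I) ^ (-s + (2 * s + 1))) x := by rw [hIσ, ← ht, ← Perm.mul_apply, ← zpow_add]
      _ = ((A * I) ^ (s + 1)) x := by congr 2; ring

theorem sameCycle_apply_iff_not_of_mem_orbit (hI : IsPerfectMatching I) (hA : IsPerfectMatching A)
    {x y : α} (hy : y ∈ orbit (closure {I, A}) x) :
    (A * I).SameCycle y (I x) ↔ ¬(A * I).SameCycle y x := by
  refine ⟨fun h h' => not_sameCycle_apply hI hA x (h'.symm.trans h), fun h => ?_⟩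
  rcases (mem_orbit_closure_iff hI.mul_self hA.mul_self).1 hy with h' | h'
  · exact absurd h'.symm h
  · exact h'.symm

theorem orbit_closure_eq (hI : I * I = 1) (hA : A * A = 1) (x : α) :
    orbit (closure {I, A}) x = orbit (zpowers (A * I)) x ∪ orbit (zpowers (A * I)) (I x) := by
  ext y
  rw [Set.mem_union, mem_orbit_zpowers_iff, mem_orbit_zpowers_iff, mem_orbit_closure_iff hI hA]

variable [Finite α]

theorem card_orbit_closure (hI : IsPerfectMatching I) (hA : IsPerfectMatching A) (x : α) :
    Nat.card (orbit (closure {I, A}) x) = 2 * Nat.card (orbit (zpowers (A * I)) x) := by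
  have hdisj : Disjoint (orbit (zpowers (A * I)) x) (orbit (zpowers (A * I)) (I x)) :=
    Set.disjoint_left.2 fun z h1 h2 => not_sameCycle_apply hI hA x
      ((mem_orbit_zpowers_iff.1 h1).trans (mem_orbit_zpowers_iff.1 h2).symm)
  rw [orbit_closure_eq hI.mul_self hA.mul_self, Nat.card_coe_set_eq,
    Set.ncard_union_eq hdisj (Set.toFinite _) (Set.toFinite _), ← Nat.card_coe_set_eq,
    ← Nat.card_coe_set_eq, card_orbit_zpowers_apply hI.mul_self hA.mul_self, two_mul]

theorem apply_eq_self_iff_of_mem_orbit (hI : IsPerfectMatching I) (hA : IsPerfectMatching A)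
    {x y : α} (hy : y ∈ orbit (closure {I, A}) x) : (A * I) y = y ↔ (A * I) x = x := by
  have h := card_orbit_closure hI hA y
  rw [orbit_eq_iff.2 hy, card_orbit_closure hI hA x] at h
  rw [← card_orbit_zpowers_eq_one_iff, ← card_orbit_zpowers_eq_one_iff]
  omega

end Dihedral

section Matchings

variable {α : Type*} [Fintype α] [DecidableEq α] {I A : Perm α}

theorem card_support_mul_add_two_mul_count_two (hI : IsPerfectMatching I)
    (hA : IsPerfectMatching A) :
    #(A * I).support + 2 * (orbitSizes (closure {I, A})).count 2 = Fintype.card α := by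
  rw [mul_comm, count_orbitSizes_mul]
  simp_rw [card_orbit_closure hI hA, show ∀ m : ℕ, 2 * m = 2 ↔ m = 1 by omega,
    card_orbit_zpowers_eq_one_iff]
  rw [add_comm]
  exact card_filter_add_card_filter_not _

theorem card_support_mul_eq_two_mul_sum (hI : IsPerfectMatching I) (hA : IsPerfectMatching A)
    {μ : Multiset ℕ} {r : ℕ} (hμ : ∀ i ∈ μ, 2 ≤ i)
    (hd : orbitSizes (closure {I, A}) = twice (μ + Multiset.replicate r 1)) :
    #(A * I).support = 2 * μ.sum := by
  have hμ1 := count_one_eq_zero_of_two_le hμ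
  have h := card_support_mul_add_two_mul_count_two hI hA
  have h2 := count_two_mul_twice (μ + Multiset.replicate r 1) 1
  rw [mul_one] at h2
  rw [card_eq_of_orbitSizes_eq_twice hd, hd, h2] at h
  simp only [Multiset.count_add, hμ1, Multiset.count_replicate_self, zero_add, Multiset.sum_add,
    Multiset.sum_replicate, smul_eq_mul, mul_one] at h
  omega

end Matchings

section CycleChoice

variable {α : Type*} {I A : Perm α} {S : Finset α}

/-- `S` is a union of cycles of `A * I` containing exactly one of the two cycles `C`, `I C` into
which each orbit of `⟨I, A⟩` of size `≥ 4` splits. -/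
structure IsCycleChoice (I A : Perm α) (S : Finset α) : Prop where
  apply_ne : ∀ x ∈ S, (A * I) x ≠ x
  apply_mem_iff : ∀ x, (A * I) x ∈ S ↔ x ∈ S
  apply_mem_iff_notMem : ∀ x, (A * I) x ≠ x → (I x ∈ S ↔ x ∉ S)

namespace IsCycleChoice

theorem zpow_apply_mem_iff (hS : IsCycleChoice I A S) (t : ℤ) (x : α) :
    ((A * I) ^ t) x ∈ S ↔ x ∈ S := by
  induction t using Int.induction_on with
  | zero => simp
  | succ t ih => rw [add_comm, zpow_one_add, Perm.mul_apply, hS.apply_mem_iff, ih]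
  | pred t ih =>
    rw [sub_eq_neg_add, zpow_add, zpow_neg_one, Perm.mul_apply, ← ih, ← hS.apply_mem_iff]
    simp

theorem mem_iff_of_sameCycle (hS : IsCycleChoice I A S) {x y : α} (h : (A * I).SameCycle x y) :
    x ∈ S ↔ y ∈ S := by
  obtain ⟨t, rfl⟩ := h
  exact (hS.zpow_apply_mem_iff t x).symm

theorem mem_iff_mem_iff_sameCycle (hS : IsCycleChoice I A S)
    (hI : IsPerfectMatching I) (hA : IsPerfectMatching A) {x y : α}
    (hy : y ∈ orbit (closure {I, A}) x) (hx : (A * I) x ≠ x) :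
    (x ∈ S ↔ y ∈ S) ↔ (A * I).SameCycle x y := by
  rcases (mem_orbit_closure_iff hI.mul_self hA.mul_self).1 hy with h | h
  · simp only [hS.mem_iff_of_sameCycle h, h]
  · have hxy : ¬(A * I).SameCycle x y := fun h' => not_sameCycle_apply hI hA x (h'.trans h.symm)
    rw [← hS.mem_iff_of_sameCycle h, hS.apply_mem_iff_notMem x hx]
    simp only [hxy, iff_false]
    tauto

variable [DecidableEq α]

def toPerm (hS : IsCycleChoice I A S) : Perm α :=
  ofSubtype ((A * I).subtypePerm hS.apply_mem_iff)

theorem toPerm_apply_of_mem (hS : IsCycleChoice I A S) {x : α} (hx : x ∈ S) :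
    hS.toPerm x = (A * I) x := by
  rw [toPerm, ofSubtype_apply_of_mem _ hx, subtypePerm_apply]

theorem toPerm_apply_of_notMem (hS : IsCycleChoice I A S) {x : α} (hx : x ∉ S) :
    hS.toPerm x = x :=
  ofSubtype_apply_of_not_mem _ hx

theorem support_toPerm [Fintype α] (hS : IsCycleChoice I A S) : hS.toPerm.support = S := by
  ext x
  rw [mem_support]
  by_cases hx : x ∈ S
  · simp only [hS.toPerm_apply_of_mem hx, hx, iff_true]
    exact hS.apply_ne x hx
  · simp [hS.toPerm_apply_of_notMem hx, hx]

theorem toPerm_zpow_apply_of_mem (hS : IsCycleChoice I A S) (t : ℤ) {x : α} (hx : x ∈ S) :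
    (hS.toPerm ^ t) x = ((A * I) ^ t) x := by
  rw [toPerm, ← map_zpow, subtypePerm_zpow, ofSubtype_apply_of_mem _ hx, subtypePerm_apply]

theorem card_orbit_zpowers_toPerm (hS : IsCycleChoice I A S) (x : α) :
    Nat.card (orbit (zpowers hS.toPerm) x) =
      if x ∈ S then Nat.card (orbit (zpowers (A * I)) x) else 1 := by
  split_ifs with hx
  · congr 2
    ext y
    simp only [mem_orbit_zpowers_iff, SameCycle, hS.toPerm_zpow_apply_of_mem _ hx]
  · exact card_orbit_zpowers_eq_one_iff.2 (hS.toPerm_apply_of_notMem hx)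

theorem toPerm_conj (hS : IsCycleChoice I A S) (hI : I * I = 1) (hA : A * A = 1) :
    hS.toPerm * I * hS.toPerm⁻¹ = A := by
  rw [mul_inv_eq_iff_eq_mul]
  ext x
  rw [Perm.mul_apply, Perm.mul_apply]
  by_cases hx : x ∈ S
  · have hIx : I x ∉ S := fun h => (hS.apply_mem_iff_notMem x (hS.apply_ne x hx)).1 h hx
    rw [hS.toPerm_apply_of_notMem hIx, hS.toPerm_apply_of_mem hx, Perm.mul_apply,
      apply_apply_of_mul_self_eq_one hA]
  by_cases hσ : (A * I) x = x
  · have hIx : I x ∉ S := fun h =>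
      hS.apply_ne _ h ((mul_apply_apply_eq_self_iff hI hA).2 hσ)
    rw [hS.toPerm_apply_of_notMem hIx, hS.toPerm_apply_of_notMem hx,
      (mul_apply_eq_self_iff hA).1 hσ]
  · have hIx : I x ∈ S := (hS.apply_mem_iff_notMem x hσ).2 hx
    rw [hS.toPerm_apply_of_mem hIx, hS.toPerm_apply_of_notMem hx, Perm.mul_apply,
      apply_apply_of_mul_self_eq_one hI]

variable [Fintype α]

theorem two_mul_card_filter (hS : IsCycleChoice I A S) (hI : I * I = 1) (hA : A * A = 1)
    (p : α → Prop) [DecidablePred p] (hp : ∀ x, p (I x) ↔ p x) :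
    2 * #(S.filter p) = #{x | (A * I) x ≠ x ∧ p x} := by
  have hin : S.filter p = ({x | ((A * I) x ≠ x ∧ p x) ∧ x ∈ S} : Finset α) := by
    ext x
    simp only [mem_filter, mem_univ, true_and]
    exact ⟨fun ⟨hx, hpx⟩ => ⟨⟨hS.apply_ne x hx, hpx⟩, hx⟩, fun ⟨⟨_, hpx⟩, hx⟩ => ⟨hx, hpx⟩⟩
  have hout : #(S.filter p) = #{x | ((A * I) x ≠ x ∧ p x) ∧ x ∉ S} := by
    refine card_nbij' I I (fun x hx => ?_) (fun x hx => ?_) (fun x _ => ?_) (fun x _ => ?_)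
    · simp only [coe_filter, mem_univ, true_and, Set.mem_ofPred_eq] at hx ⊢
      have hσ := hS.apply_ne x hx.1
      refine ⟨⟨mt (mul_apply_apply_eq_self_iff hI hA).1 hσ, (hp x).2 hx.2⟩, ?_⟩
      exact fun h => (hS.apply_mem_iff_notMem x hσ).1 h hx.1
    · simp only [coe_filter, mem_univ, true_and, Set.mem_ofPred_eq] at hx ⊢
      exact ⟨(hS.apply_mem_iff_notMem x hx.1.1).2 hx.2, (hp x).2 hx.1.2⟩
    · exact apply_apply_of_mul_self_eq_one hI x
    · exact apply_apply_of_mul_self_eq_one hI x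
  rw [two_mul]
  nth_rewrite 1 [hin]
  rw [hout, ← card_filter_add_card_filter_not (s := {x | (A * I) x ≠ x ∧ p x}) (· ∈ S),
    filter_filter, filter_filter]

theorem two_mul_card (hS : IsCycleChoice I A S) (hI : I * I = 1) (hA : A * A = 1) :
    2 * #S = #(A * I).support := by
  convert hS.two_mul_card_filter hI hA (fun _ => True) (fun _ => Iff.rfl) using 2
  · simp
  · ext x
    simp

theorem count_orbitSizes_zpowers_toPerm (hS : IsCycleChoice I A S) (hI : IsPerfectMatching I)
    (hA : IsPerfectMatching A) {m : ℕ} (hm : m ≠ 1) :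
    (orbitSizes (zpowers hS.toPerm)).count m = (orbitSizes (closure {I, A})).count (2 * m) := by
  rcases Nat.eq_zero_or_pos m with rfl | hm0
  · rw [count_zero_orbitSizes, count_zero_orbitSizes]
  have hcard : (orbitSizes (zpowers hS.toPerm)).count m * (2 * m) =
      (orbitSizes (closure {I, A})).count (2 * m) * (2 * m) := by
    calc (orbitSizes (zpowers hS.toPerm)).count m * (2 * m)
        = 2 * #(S.filter fun x => Nat.card (orbit (zpowers (A * I)) x) = m) := by
          rw [mul_left_comm, count_orbitSizes_mul]
          congr 2
          ext x
          simp only [mem_filter, mem_univ, true_and, hS.card_orbit_zpowers_toPerm]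
          split_ifs with hx <;> simp [hx, Ne.symm hm]
      _ = #{x | (A * I) x ≠ x ∧ Nat.card (orbit (zpowers (A * I)) x) = m} :=
          hS.two_mul_card_filter hI.mul_self hA.mul_self _ fun x =>
            by rw [card_orbit_zpowers_apply hI.mul_self hA.mul_self]
      _ = #{x | Nat.card (orbit (closure {I, A}) x) = 2 * m} := by
          congr 1
          ext x
          rw [mem_filter, mem_filter, Ne, ← card_orbit_zpowers_eq_one_iff,
            card_orbit_closure hI hA, and_congr_right_iff]
          omega
      _ = (orbitSizes (closure {I, A})).count (2 * m) * (2 * m) :=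
          (count_orbitSizes_mul _ _).symm
  exact Nat.eq_of_mul_eq_mul_right (by omega) hcard

theorem orbitSizes_zpowers_toPerm (hS : IsCycleChoice I A S) (hI : IsPerfectMatching I)
    (hA : IsPerfectMatching A) {μ : Multiset ℕ} {r : ℕ} (hμ : ∀ i ∈ μ, 2 ≤ i)
    (hd : orbitSizes (closure {I, A}) = twice (μ + Multiset.replicate r 1)) :
    orbitSizes (zpowers hS.toPerm) = μ + Multiset.replicate (Fintype.card α - μ.sum) 1 := by
  have hcount : ∀ m, (orbitSizes (closure {I, A})).count (2 * m) =
      (μ + Multiset.replicate r 1).count m := fun m => by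
    rw [hd, count_two_mul_twice]
  ext m
  rcases eq_or_ne m 1 with rfl | hm
  · have h1 := card_support_add_count_one_orbitSizes hS.toPerm
    have h2 := hS.two_mul_card hI.mul_self hA.mul_self
    have hμ1 := count_one_eq_zero_of_two_le hμ
    rw [hS.support_toPerm] at h1
    rw [card_support_mul_eq_two_mul_sum hI hA hμ hd] at h2
    simp only [Multiset.count_add, Multiset.count_replicate_self, hμ1]
    omega
  · rw [hS.count_orbitSizes_zpowers_toPerm hI hA hm, hcount]
    simp [Multiset.count_replicate, Ne.symm hm]

end IsCycleChoice

end CycleChoice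

section Conjugators

variable {α : Type*} [Fintype α] [DecidableEq α] {I A π : Perm α}

/- Every `x` fixed by `π` and moved by `A * I` has `π (I x) = A x ≠ I x`; there are at least
`#π.support` such points. -/
theorem image_support_sdiff_support (hA : A * A = 1) (hconj : π * I * π⁻¹ = A)
    (hcard : 2 * #π.support ≤ #(A * I).support) :
    ((A * I).support \ π.support).image I = π.support := by
  have hπI : ∀ x, π (I x) = A (π x) := DFunLike.congr_fun (mul_inv_eq_iff_eq_mul.1 hconj)
  refine eq_of_subset_of_card_le (fun y hy => ?_) ?_
  · obtain ⟨x, hx, rfl⟩ := mem_image.1 hy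
    rw [mem_sdiff, mem_support, notMem_support] at hx
    rw [mem_support, hπI, hx.2]
    exact fun h => hx.1 ((mul_apply_eq_self_iff hA).2 h)
  · rw [card_image_of_injective _ I.injective]
    have := le_card_sdiff π.support (A * I).support
    omega

theorem exists_isCycleChoice_support (hI : I * I = 1) (hA : A * A = 1) (hconj : π * I * π⁻¹ = A)
    (hcard : 2 * #π.support ≤ #(A * I).support) :
    ∃ hS : IsCycleChoice I A π.support, hS.toPerm = π := by
  have hπI : ∀ x, π (I x) = A (π x) := DFunLike.congr_fun (mul_inv_eq_iff_eq_mul.1 hconj)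
  have himage := image_support_sdiff_support hA hconj hcard
  have hmem : ∀ y, y ∈ π.support ↔ I y ∈ (A * I).support \ π.support := fun y => by
    conv_lhs => rw [← himage, mem_image]
    refine ⟨fun ⟨x, hx, hxy⟩ => ?_, fun h => ⟨I y, h, apply_apply_of_mul_self_eq_one hI y⟩⟩
    rwa [← hxy, apply_apply_of_mul_self_eq_one hI]
  have hπσ : ∀ y ∈ π.support, π y = (A * I) y := fun y hy => by
    have hIy := ((hmem y).1 hy)
    rw [mem_sdiff, notMem_support] at hIy
    calc π y = π (I (I y)) := by rw [apply_apply_of_mul_self_eq_one hI]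
      _ = A (I y) := by rw [hπI, hIy.2]
  refine ⟨⟨fun y hy => ?_, fun y => ⟨fun hy => ?_, fun hy => ?_⟩, fun y hy => ?_⟩, ?_⟩
  · exact hπσ y hy ▸ mem_support.1 hy
  · have hz : π⁻¹ ((A * I) y) ∈ π.support := by rwa [← support_inv, apply_mem_support, support_inv]
    have : (A * I) (π⁻¹ ((A * I) y)) = (A * I) y := by
      rw [← hπσ _ hz, Perm.coe_inv, apply_symm_apply]
    rwa [(A * I).injective this] at hz
  · exact hπσ y hy ▸ apply_mem_support.2 hy
  · rw [hmem, apply_apply_of_mul_self_eq_one hI, mem_sdiff, mem_support]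
    exact and_iff_right hy
  · ext y
    by_cases hy : y ∈ π.support
    · rw [IsCycleChoice.toPerm_apply_of_mem _ hy, hπσ y hy]
    · rw [IsCycleChoice.toPerm_apply_of_notMem _ hy, notMem_support.1 hy]

def conjugatorsEquivCycleChoices (hI : I * I = 1) (hA : A * A = 1) :
    {π : Perm α // π * I * π⁻¹ = A ∧ 2 * #π.support ≤ #(A * I).support} ≃
      {S : Finset α // IsCycleChoice I A S} where
  toFun π := ⟨π.1.support, (exists_isCycleChoice_support hI hA π.2.1 π.2.2).fst⟩
  invFun S := ⟨S.2.toPerm, S.2.toPerm_conj hI hA, by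
    rw [S.2.support_toPerm, S.2.two_mul_card hI hA]⟩
  left_inv π := Subtype.ext (exists_isCycleChoice_support hI hA π.2.1 π.2.2).snd
  right_inv S := Subtype.ext S.2.support_toPerm

end Conjugators

section CountingChoices

variable {α : Type*} [Fintype α] [DecidableEq α] {I A : Perm α}

/- In each orbit of `⟨I, A⟩` moved by `A * I`, choose the cycle of the representative `q.out` if the
orbit `q` lies in `T`, and the other cycle otherwise. -/
open Classical in
theorem isCycleChoice_of_orbits (hI : IsPerfectMatching I) (hA : IsPerfectMatching A)
    (T : Set (orbitRel.Quotient (closure {I, A}) α)) :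
    IsCycleChoice I A {x | (A * I) x ≠ x ∧
      ((A * I).SameCycle (⟦x⟧ : orbitRel.Quotient (closure {I, A}) α).out x ↔ ⟦x⟧ ∈ T)} := by
  have hmk : ∀ g ∈ closure {I, A}, ∀ x, (⟦g x⟧ : orbitRel.Quotient (closure {I, A}) α) = ⟦x⟧ :=
    fun g hg x => orbitRel.Quotient.quotient_smul_eq (g := (⟨g, hg⟩ : closure {I, A}))
  have hI' : I ∈ closure {I, A} := subset_closure (by simp)
  have hA' : A ∈ closure {I, A} := subset_closure (by simp)
  refine ⟨fun x hx => (mem_filter.1 hx).2.1, fun x => ?_, fun x hx => ?_⟩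
  · simp only [mem_filter, mem_univ, true_and, hmk _ (mul_mem hA' hI'), sameCycle_apply_right,
      (A * I).injective.ne_iff]
  · have hout := orbitRel_apply.1 (Quotient.mk_out (s := orbitRel (closure {I, A}) α) x)
    simp only [mem_filter, mem_univ, true_and, hmk _ hI', Ne,
      mul_apply_apply_eq_self_iff hI.mul_self hA.mul_self,
      sameCycle_apply_iff_not_of_mem_orbit hI hA hout, hx]
    tauto

open Classical in
noncomputable def cycleChoiceEquiv (hI : IsPerfectMatching I) (hA : IsPerfectMatching A) :
    {S : Finset α // IsCycleChoice I A S} ≃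
      Set {q : orbitRel.Quotient (closure {I, A}) α // (A * I) q.out ≠ q.out} where
  toFun S := {q | q.1.out ∈ S.1}
  invFun T := ⟨_, isCycleChoice_of_orbits hI hA (Subtype.val '' T)⟩
  left_inv := by
    rintro ⟨S, hS⟩
    ext x
    have hout := orbitRel_apply.1 (Quotient.mk_out (s := orbitRel (closure {I, A}) α) x)
    simp only [mem_filter, mem_univ, true_and, Set.mem_image, Subtype.exists, exists_and_right,
      exists_eq_right, Set.mem_ofPred_eq]
    by_cases hx : (A * I) x = x
    · simp only [hx, ne_eq, not_true_eq_false, false_and, false_iff]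
      exact fun h => hS.apply_ne x h hx
    · have hr := mt (apply_eq_self_iff_of_mem_orbit hI hA hout).1 hx
      rw [← hS.mem_iff_mem_iff_sameCycle hI hA (mem_orbit_symm.1 hout) hr]
      simp only [hx, hr, ne_eq, not_false_eq_true, true_and, exists_true_left]
      tauto
  right_inv T := by
    ext q
    simp only [Set.mem_ofPred_eq, mem_filter, mem_univ, true_and, Quotient.out_eq,
      SameCycle.refl, true_iff, Subtype.val_injective.mem_set_image]
    exact and_iff_right q.2

theorem card_isCycleChoice (hI : IsPerfectMatching I) (hA : IsPerfectMatching A) :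
    Nat.card {S : Finset α // IsCycleChoice I A S} =
      2 ^ Multiset.card ((orbitSizes (closure {I, A})).filter (· ≠ 2)) := by
  let _ : Fintype (orbitRel.Quotient (closure {I, A}) α) := Fintype.ofFinite _
  rw [Nat.card_congr (cycleChoiceEquiv hI hA), Nat.card_eq_fintype_card, Fintype.card_set,
    ← Nat.card_eq_fintype_card, card_filter_orbitSizes]
  congr 1
  refine Nat.card_congr (Equiv.subtypeEquivRight fun q => ?_)
  rw [card_orbit_closure hI hA, Ne, ← card_orbit_zpowers_eq_one_iff]
  omega

end CountingChoices

theorem orbitSizes_zpowers_eq_and_conj_iff {α : Type*} [Fintype α] [DecidableEq α]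
    {I A : Perm α} (hI : IsPerfectMatching I) (hA : IsPerfectMatching A) {μ : Multiset ℕ} {r : ℕ}
    (hμ : ∀ i ∈ μ, 2 ≤ i) (hd : orbitSizes (closure {I, A}) = twice (μ + Multiset.replicate r 1))
    (π : Perm α) :
    (orbitSizes (zpowers π) = μ + Multiset.replicate (Fintype.card α - μ.sum) 1 ∧
        π * I * π⁻¹ = A) ↔
      π * I * π⁻¹ = A ∧ 2 * #π.support ≤ #(A * I).support := by
  refine ⟨fun ⟨htype, hconj⟩ => ⟨hconj, ?_⟩, fun h => ?_⟩
  · have hμ1 := count_one_eq_zero_of_two_le hμ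
    have h := card_support_add_count_one_orbitSizes π
    have hσ := card_support_mul_eq_two_mul_sum hI hA hμ hd
    have hle := card_le_univ (A * I).support
    rw [htype, Multiset.count_add, Multiset.count_replicate_self, hμ1] at h
    omega
  · obtain ⟨hS, hπ⟩ := exists_isCycleChoice_support hI.mul_self hA.mul_self h.1 h.2
    rw [← hπ]
    exact ⟨hS.orbitSizes_zpowers_toPerm hI hA hμ hd, hS.toPerm_conj hI.mul_self hA.mul_self⟩

theorem count_conjugators_of_cycleType_general (μ : Multiset ℕ) (hμ : ∀ i ∈ μ, 2 ≤ i)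
    (k n : ℕ) (hk : μ.sum = k)
    (I A : PerfMatching (2 * n))
    (hd : dMatch I.1 A.1 = twice (μ + Multiset.replicate (n - k) 1)) :
    Nat.card {π : Equiv.Perm (Fin (2 * n)) //
        permOrbitSizes π = μ + Multiset.replicate (2 * n - k) 1 ∧
        π * I.1 * π⁻¹ = A.1} = 2 ^ (Multiset.card μ) := by
  have hI : IsPerfectMatching I.1 := ⟨I.2.1, I.2.2⟩
  have hA : IsPerfectMatching A.1 := ⟨A.2.1, A.2.2⟩
  have hiff := orbitSizes_zpowers_eq_and_conj_iff hI hA hμ hd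
  rw [Fintype.card_fin, hk] at hiff
  refine (Nat.card_congr ((Equiv.subtypeEquivRight hiff).trans
    (conjugatorsEquivCycleChoices hI.mul_self hA.mul_self))).trans ?_
  rw [card_isCycleChoice hI hA, show orbitSizes _ = _ from hd, card_filter_ne_two_twice hμ]

/-- Let `μ` be a partition with all parts `≥ 2`, `|μ| = k`, having `ℓ(μ)` parts, and
let `n ≥ k`. If `I`, `A` are perfect matchings of `Fin (2n)` with
`d(I,A) = 2(μ,1^{n−k})`, then the number of permutations `π` of `Fin (2n)` of cycle
type `(μ,1^{2n−k})` with `π I π⁻¹ = A` equals `2^{ℓ(μ)}`. -/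
theorem count_conjugators_of_cycleType (μ : Multiset ℕ) (hμ : ∀ i ∈ μ, 2 ≤ i)
    (k n : ℕ) (hk : μ.sum = k) (hn : k ≤ n)
    (I A : PerfMatching (2 * n))
    (hd : dMatch I.1 A.1 = twice (μ + Multiset.replicate (n - k) 1)) :
    Nat.card {π : Equiv.Perm (Fin (2 * n)) //
        permOrbitSizes π = μ + Multiset.replicate (2 * n - k) 1 ∧
        π * I.1 * π⁻¹ = A.1} = 2 ^ (Multiset.card μ) :=
  count_conjugators_of_cycleType_general μ hμ k n hk I A hd
end

section
/- Let λ and μ be Young diagrams. If the multisets of contents of λ and of μ are equal (as multisets of integers over all boxes), then λ = μ. -/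
/-- The multiset of contents of a Young diagram: the content of the box in row `i`
and column `j` (indexed from 0) is `j − i`. -/
def contents (lam : YoungDiagram) : Multiset ℤ :=
  lam.cells.val.map fun c => (c.2 : ℤ) - (c.1 : ℤ)

/-- The `t`-th cell on the diagonal of content `k`. -/
def dcell (k : ℤ) (t : ℕ) : ℕ × ℕ := (t + (-k).toNat, t + k.toNat)

lemma dcell_content (k : ℤ) (t : ℕ) : ((dcell k t).2 : ℤ) - ((dcell k t).1 : ℤ) = k := by
  simp only [dcell]
  push_cast
  omega

lemma dcell_min (k : ℤ) (t : ℕ) : min (dcell k t).1 (dcell k t).2 = t := by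
  simp only [dcell]
  omega

lemma cell_eq_dcell (i j : ℕ) : (i, j) = dcell ((j : ℤ) - i) (min i j) := by
  simp only [dcell, Prod.mk.injEq]
  omega

lemma dcell_injective (k : ℤ) : Function.Injective (dcell k) := by
  intro a b hab
  simpa [dcell] using congrArg Prod.fst hab

lemma dcell_mem_of_le (mu : YoungDiagram) (k : ℤ) {s t : ℕ} (hst : s ≤ t)
    (h : dcell k t ∈ mu) : dcell k s ∈ mu :=
  mu.up_left_mem (by simp [dcell]; omega) (by simp [dcell]; omega) h

lemma count_contents (lam : YoungDiagram) (k : ℤ) :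
    Multiset.count k (contents lam) =
      (lam.cells.filter (fun c => ((c.2 : ℤ) - c.1) = k)).card := by
  rw [contents, Multiset.count_map]
  have h2 : (lam.cells.filter (fun c => ((c.2 : ℤ) - c.1) = k)).card
      = Multiset.card (lam.cells.val.filter (fun c => ((c.2 : ℤ) - c.1) = k)) := by
    rw [Finset.card, Finset.filter_val]
  rw [h2]
  congr 1
  exact Multiset.filter_congr (fun x _ => by constructor <;> omega)

lemma dcell_mem_of_lt_card (mu : YoungDiagram) (k : ℤ) (t : ℕ)
    (h : t < (mu.cells.filter (fun c => ((c.2 : ℤ) - c.1) = k)).card) :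
    dcell k t ∈ mu := by
  set S := mu.cells.filter (fun c => ((c.2 : ℤ) - c.1) = k) with hS
  have hcell : ∀ c ∈ S, c = dcell k (min c.1 c.2) := by
    intro c hc
    obtain ⟨hc1, hc2⟩ := Finset.mem_filter.mp hc
    obtain ⟨i, j⟩ := c
    have hd := cell_eq_dcell i j
    simp only at hc2
    rw [hc2] at hd
    exact hd
  set T := S.image (fun c => min c.1 c.2) with hT
  have hcardT : T.card = S.card := by
    apply Finset.card_image_of_injOn
    intro a ha b hb hab
    rw [hcell a ha, hcell b hb]
    exact congrArg (dcell k) hab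
  have hdc : ∀ s ∈ T, dcell k s ∈ mu := by
    intro s hs
    obtain ⟨c, hc, hcs⟩ := Finset.mem_image.mp hs
    have := hcell c hc
    rw [hcs] at this
    rw [← this]
    exact (YoungDiagram.mem_cells _).mp (Finset.mem_filter.mp hc).1
  by_cases ht : t ∈ T
  · exact hdc t ht
  · exfalso
    have hsub : T ⊆ Finset.range t := by
      intro s hs
      rw [Finset.mem_range]
      by_contra hcon
      push_neg at hcon
      apply ht
      have hmem : dcell k t ∈ mu := dcell_mem_of_le mu k hcon (hdc s hs)
      refine Finset.mem_image.mpr ⟨dcell k t, ?_, dcell_min k t⟩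
      exact Finset.mem_filter.mpr ⟨(YoungDiagram.mem_cells _).mpr hmem, dcell_content k t⟩
    have := Finset.card_le_card hsub
    rw [Finset.card_range, hcardT] at this
    omega

lemma mem_of_contents_le (lam mu : YoungDiagram) (h : contents lam = contents mu) :
    ∀ c ∈ lam, c ∈ mu := by
  rintro ⟨i, j⟩ hc
  set k : ℤ := (j : ℤ) - i with hk
  set t := min i j with ht
  rw [cell_eq_dcell i j] at hc ⊢
  have hsub : (Finset.range (t + 1)).image (dcell k) ⊆
      lam.cells.filter (fun c => ((c.2 : ℤ) - c.1) = k) := by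
    intro c hcm
    obtain ⟨s, hs, rfl⟩ := Finset.mem_image.mp hcm
    rw [Finset.mem_range] at hs
    refine Finset.mem_filter.mpr ⟨?_, dcell_content k s⟩
    exact (YoungDiagram.mem_cells _).mpr (dcell_mem_of_le lam k (by omega) hc)
  have hcard : t + 1 ≤ (lam.cells.filter (fun c => ((c.2 : ℤ) - c.1) = k)).card := by
    have := Finset.card_le_card hsub
    rwa [Finset.card_image_of_injective _ (dcell_injective k), Finset.card_range] at this
  have hlt : t < (mu.cells.filter (fun c => ((c.2 : ℤ) - c.1) = k)).card := by
    have h1 := count_contents lam k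
    have h2 := count_contents mu k
    rw [h] at h1
    omega
  exact dcell_mem_of_lt_card mu k t hlt

/-- A Young diagram is determined by its multiset of contents. -/
theorem youngDiagram_eq_of_contents_eq (lam mu : YoungDiagram)
    (h : contents lam = contents mu) : lam = mu := by
  ext c
  exact ⟨fun hc => mem_of_contents_le lam mu h c hc,
    fun hc => mem_of_contents_le mu lam h.symm c hc⟩
end

section
/- Let n ≥ 2 and let V be a finite-dimensional irreducible complex representation of the symmetric group S_n. Let X_i = Σ_{j < i} (j i) ∈ ℂ[S_n], 1 ≤ i ≤ n, be the Young–Jucys–Murphy elements, acting on V through the representation. If v ∈ V is a nonzero simultaneous eigenvector of X_1, …, X_{n−1} (i.e., for each 1 ≤ i ≤ n−1 there is a scalar a_i ∈ ℂ with X_i · v = a_i v), then v is also an eigenvector of X_n: there is a_n ∈ ℂ with X_n · v = a_n v. -/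
/-- The Young–Jucys–Murphy element `X_i = Σ_{j<i} (j i)` in the group algebra of the
symmetric group `S_n` (so `X_1 = 0`). -/
noncomputable def YJM (n : ℕ) (i : Fin n) : MonoidAlgebra ℂ (Equiv.Perm (Fin n)) :=
  ∑ j ∈ Finset.univ.filter (fun j : Fin n => j < i),
    MonoidAlgebra.of ℂ (Equiv.Perm (Fin n)) (Equiv.swap j i)

/-- Sum of all transpositions, counted twice (over ordered pairs). -/
noncomputable def allT (n : ℕ) : MonoidAlgebra ℂ (Equiv.Perm (Fin n)) :=
  ∑ p ∈ Finset.univ.offDiag, MonoidAlgebra.of ℂ (Equiv.Perm (Fin n)) (Equiv.swap p.1 p.2)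

lemma allT_comm (n : ℕ) (g : Equiv.Perm (Fin n)) :
    MonoidAlgebra.of ℂ (Equiv.Perm (Fin n)) g * allT n
      = allT n * MonoidAlgebra.of ℂ (Equiv.Perm (Fin n)) g := by
  unfold allT
  rw [Finset.mul_sum, Finset.sum_mul]
  refine Finset.sum_nbij' (fun p => (g p.1, g p.2)) (fun p => (g⁻¹ p.1, g⁻¹ p.2))
    ?_ ?_ ?_ ?_ ?_
  · intro p hp
    simp only [Finset.mem_offDiag, Finset.mem_univ, true_and] at hp ⊢
    exact fun h => hp (g.injective h)
  · intro p hp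
    simp only [Finset.mem_offDiag, Finset.mem_univ, true_and] at hp ⊢
    exact fun h => hp (g⁻¹.injective h)
  · intro p _; simp
  · intro p _; simp
  · intro p _
    rw [← map_mul, ← map_mul, Equiv.swap_apply_apply]
    group

lemma allT_eq (n : ℕ) : allT n = 2 • ∑ i : Fin n, YJM n i := by
  have hsym : ∀ p : Fin n × Fin n,
      MonoidAlgebra.of ℂ (Equiv.Perm (Fin n)) (Equiv.swap p.1 p.2)
        = MonoidAlgebra.of ℂ (Equiv.Perm (Fin n)) (Equiv.swap p.2 p.1) := by
    intro p; rw [Equiv.swap_comm]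
  have key : allT n = (∑ p ∈ Finset.univ.offDiag.filter (fun p : Fin n × Fin n => p.1 < p.2),
      MonoidAlgebra.of ℂ (Equiv.Perm (Fin n)) (Equiv.swap p.1 p.2))
      + ∑ p ∈ Finset.univ.offDiag.filter (fun p : Fin n × Fin n => ¬ p.1 < p.2),
      MonoidAlgebra.of ℂ (Equiv.Perm (Fin n)) (Equiv.swap p.1 p.2) := by
    rw [Finset.sum_filter_add_sum_filter_not]
    rfl
  have hS : ∀ i : Fin n, YJM n i = ∑ p ∈ (Finset.univ.offDiag.filter
      (fun p : Fin n × Fin n => p.1 < p.2)).filter (fun p => p.2 = i),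
      MonoidAlgebra.of ℂ (Equiv.Perm (Fin n)) (Equiv.swap p.1 p.2) := by
    intro i
    unfold YJM
    refine Finset.sum_nbij' (fun j => (j, i)) (fun p => p.1) ?_ ?_ ?_ ?_ ?_
    · intro j hj
      simp only [Finset.mem_filter, Finset.mem_univ, true_and] at hj
      simp only [Finset.mem_filter, Finset.mem_offDiag, Finset.mem_univ, true_and]
      exact ⟨⟨ne_of_lt hj, hj⟩, trivial⟩
    · intro p hp
      simp only [Finset.mem_filter, Finset.mem_offDiag, Finset.mem_univ, true_and] at hp
      simp only [Finset.mem_filter, Finset.mem_univ, true_and]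
      rw [← hp.2]; exact hp.1.2
    · intro j _; rfl
    · intro p hp
      simp only [Finset.mem_filter, Finset.mem_offDiag, Finset.mem_univ, true_and] at hp
      exact Prod.ext rfl hp.2.symm
    · intro j _; rfl
  have hsum : ∑ i : Fin n, YJM n i = ∑ p ∈ Finset.univ.offDiag.filter
      (fun p : Fin n × Fin n => p.1 < p.2),
      MonoidAlgebra.of ℂ (Equiv.Perm (Fin n)) (Equiv.swap p.1 p.2) := by
    rw [Finset.sum_congr rfl (fun i _ => hS i)]
    rw [← Finset.sum_fiberwise_of_maps_to (g := fun p : Fin n × Fin n => p.2)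
      (fun p _ => Finset.mem_univ p.2)]
  have hflip : ∑ p ∈ Finset.univ.offDiag.filter (fun p : Fin n × Fin n => ¬ p.1 < p.2),
      MonoidAlgebra.of ℂ (Equiv.Perm (Fin n)) (Equiv.swap p.1 p.2)
      = ∑ p ∈ Finset.univ.offDiag.filter (fun p : Fin n × Fin n => p.1 < p.2),
      MonoidAlgebra.of ℂ (Equiv.Perm (Fin n)) (Equiv.swap p.1 p.2) := by
    refine Finset.sum_nbij' (fun p => (p.2, p.1)) (fun p => (p.2, p.1)) ?_ ?_ ?_ ?_ ?_
    · intro p hp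
      simp only [Finset.mem_filter, Finset.mem_offDiag, Finset.mem_univ, true_and] at hp ⊢
      exact ⟨Ne.symm hp.1, lt_of_le_of_ne (not_lt.mp hp.2) (Ne.symm hp.1)⟩
    · intro p hp
      simp only [Finset.mem_filter, Finset.mem_offDiag, Finset.mem_univ, true_and] at hp ⊢
      exact ⟨Ne.symm hp.1, not_lt.mpr (le_of_lt hp.2)⟩
    · intro p _; rfl
    · intro p _; rfl
    · intro p _; exact hsym p
  rw [key, hflip, hsum, two_smul]

/-- In an irreducible representation of `S_n`, any nonzero simultaneous eigenvector of
the Young–Jucys–Murphy elements `X_1, …, X_{n−1}` is also an eigenvector of `X_n`. -/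
theorem yjm_last_eigenvector (n : ℕ) (hn : 2 ≤ n)
    (V : Type) [AddCommGroup V] [Module ℂ V] [FiniteDimensional ℂ V]
    (ρ : Representation ℂ (Equiv.Perm (Fin n)) V)
    (hirr : Nontrivial V ∧
      ∀ U : Submodule ℂ V, (∀ (g : Equiv.Perm (Fin n)) (v : V), v ∈ U → ρ g v ∈ U) →
        U = ⊥ ∨ U = ⊤)
    (v : V) (hv : v ≠ 0)
    (heig : ∀ i : Fin n, (i : ℕ) + 1 < n →
      ∃ a : ℂ, ρ.asAlgebraHom (YJM n i) v = a • v) :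
    ∃ a : ℂ, ρ.asAlgebraHom (YJM n (Fin.mk (n - 1) (by omega))) v = a • v := by
  classical
  obtain ⟨hnt, hinv⟩ := hirr
  set L : Fin n := Fin.mk (n - 1) (by omega) with hLdef
  set A : Module.End ℂ V := ρ.asAlgebraHom (allT n) with hA
  have hcomm : ∀ g : Equiv.Perm (Fin n), ρ g * A = A * ρ g := by
    intro g
    have h1 : ρ.asAlgebraHom (MonoidAlgebra.of ℂ (Equiv.Perm (Fin n)) g) = ρ g := by
      simpa using ρ.asAlgebraHom_single g 1
    rw [hA, ← h1, ← map_mul, ← map_mul, allT_comm]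
  obtain ⟨c, hc⟩ := Module.End.exists_eigenvalue A
  have heigU : Module.End.eigenspace A c = ⊤ := by
    have hst : ∀ (g : Equiv.Perm (Fin n)) (w : V),
        w ∈ Module.End.eigenspace A c → ρ g w ∈ Module.End.eigenspace A c := by
      intro g w hw
      rw [Module.End.mem_eigenspace_iff] at hw ⊢
      have h2 := congrArg (fun f : Module.End ℂ V => f w) (hcomm g)
      simp only [Module.End.mul_apply] at h2
      rw [← h2, hw, map_smul]
    rcases hinv (Module.End.eigenspace A c) hst with h | h
    · exact absurd h hc
    · exact h
  have hAv : A v = c • v :=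
    Module.End.mem_eigenspace_iff.mp (heigU ▸ Submodule.mem_top)
  -- eigenvalue of the sum of all YJM elements
  have hsumv : ρ.asAlgebraHom (∑ i : Fin n, YJM n i) v = ((2:ℂ)⁻¹ * c) • v := by
    have h2 : ((2:ℕ) • ρ.asAlgebraHom (∑ i : Fin n, YJM n i)) v = c • v := by
      rw [← map_nsmul, ← allT_eq]; exact hAv
    have h3 : (2:ℂ) • ρ.asAlgebraHom (∑ i : Fin n, YJM n i) v = c • v := by
      rw [← h2]; simp [two_smul]
    have := congrArg (fun w => (2:ℂ)⁻¹ • w) h3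
    simpa [smul_smul] using this
  -- eigenvalues for the other YJM elements
  have haux : ∀ i ∈ Finset.univ.erase L, ∃ a : ℂ, ρ.asAlgebraHom (YJM n i) v = a • v := by
    intro i hi
    have h1 : i ≠ L := (Finset.mem_erase.mp hi).1
    have h2 : (i:ℕ) ≠ n - 1 := fun h => h1 (Fin.ext (by simp [hLdef, h]))
    have h3 := i.isLt
    exact heig i (by omega)
  set a : Fin n → ℂ := fun i =>
    if h : ∃ b : ℂ, ρ.asAlgebraHom (YJM n i) v = b • v then h.choose else 0 with hadef
  have ha : ∀ i ∈ Finset.univ.erase L, ρ.asAlgebraHom (YJM n i) v = a i • v := by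
    intro i hi
    have h := haux i hi
    simp only [hadef, dif_pos h]
    exact h.choose_spec
  have hsplit : (∑ i : Fin n, YJM n i) = YJM n L + ∑ i ∈ Finset.univ.erase L, YJM n i :=
    (Finset.add_sum_erase _ _ (Finset.mem_univ L)).symm
  refine ⟨(2:ℂ)⁻¹ * c - ∑ i ∈ Finset.univ.erase L, a i, ?_⟩
  have hkey := hsumv
  rw [hsplit, map_add, map_sum] at hkey
  have hkey2 : ρ.asAlgebraHom (YJM n L) v
      + ∑ i ∈ Finset.univ.erase L, ρ.asAlgebraHom (YJM n i) v = ((2:ℂ)⁻¹ * c) • v := by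
    simpa [LinearMap.add_apply, LinearMap.sum_apply] using hkey
  rw [Finset.sum_congr rfl ha, ← Finset.sum_smul] at hkey2
  rw [sub_smul]
  exact eq_sub_of_add_eq hkey2
end

section
/- Let n ≥ 1 and let J and A be perfect matchings of Fin (2n). Let s and t be points of Fin (2n) lying in different orbits of the subgroup ⟨J, A⟩ generated by J and A (different connected components of the graph J ∪ A), and let A' = (s t) A (s t). Then the orbits of ⟨J, A'⟩ on Fin (2n) are exactly: the orbits of ⟨J, A⟩ other than those containing s and t, together with the union of the two orbits of ⟨J, A⟩ containing s and t. In particular, d(J, A') is obtained from d(J, A) by replacing the two parts equal to the sizes of the orbits of s and t by a single part equal to their sum. -/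
/-!
Let `O_s`, `O_t` be the `⟨J, A⟩`-orbits of `s`, `t`, and `Q` the `⟨J, A'⟩`-orbit of `s`.
The crux is that `t ∈ Q`. Otherwise `Q ∩ O_s` is stable under `J`, while removing `s` from it
leaves `(s t) Q ∩ O_s`, which is stable under `A`; as `J` and `A` are fixed-point-free
involutions, both sets have even size, although they differ by one point. Once `s, t ∈ Q`, the
set `Q` is stable under `(s t)`, hence under `A = (s t) A' (s t)`, so it contains `O_s ∪ O_t`;
conversely `O_s ∪ O_t` is stable under `J`, `A` and `(s t)`, hence under `A'`. An orbit avoiding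
`s` and `t` is fixed pointwise by `(s t)`, so it is stable under `A` exactly when it is under `A'`.
-/

open MulAction Subgroup Equiv Set

section

variable {α : Type*}

theorem mapsTo_orbit {K : Subgroup (Perm α)} {g : Perm α} (hg : g ∈ K) (x : α) :
    MapsTo g (orbit K x) (orbit K x) := by
  rintro _ ⟨k, rfl⟩
  exact ⟨⟨g, hg⟩ * k, mul_smul _ _ _⟩

theorem mapsTo_orbit_closure_pair_left (J B : Perm α) (x : α) :
    MapsTo J (orbit (closure {J, B}) x) (orbit (closure {J, B}) x) :=
  mapsTo_orbit (subset_closure (mem_insert J {B})) x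

theorem mapsTo_orbit_closure_pair_right (J B : Perm α) (x : α) :
    MapsTo B (orbit (closure {J, B}) x) (orbit (closure {J, B}) x) :=
  mapsTo_orbit (subset_closure (mem_insert_of_mem J (mem_singleton B))) x

theorem orbit_closure_subset [Finite α] {T : Set (Perm α)} {S : Set α}
    (hT : ∀ g ∈ T, MapsTo g S S) {x : α} (hx : x ∈ S) : orbit (closure T) x ⊆ S := by
  rintro _ ⟨⟨g, hg⟩, rfl⟩
  suffices MapsTo g S S from this hx
  induction hg using closure_induction with
  | mem g hg => exact hT g hg
  | one => exact mapsTo_id S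
  | mul g h _ _ hg hh => exact hg.comp hh
  | inv g _ hg => exact Perm.perm_symm_mapsTo_of_mapsTo g hg

theorem orbit_closure_pair_subset [Finite α] {J B : Perm α} {S : Set α}
    (hJ : MapsTo J S S) (hB : MapsTo B S S) {x : α} (hx : x ∈ S) :
    orbit (closure {J, B}) x ⊆ S :=
  orbit_closure_subset (by rintro g (rfl | rfl) <;> assumption) hx

theorem even_ncard_of_mapsTo [Finite α] {f : Perm α} (hf : f * f = 1) (hfix : ∀ x, f x ≠ x)
    {S : Set α} (hS : MapsTo f S S) : Even S.ncard := by
  classical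
  have := Fintype.ofFinite α
  have hff : ∀ x, f (f x) = x := fun x => by rw [← Perm.mul_apply, hf, Perm.one_apply]
  let g : Perm S := f.subtypePerm fun x => ⟨fun hx => hff x ▸ hS hx, fun hx => hS hx⟩
  have hg : g ^ 2 = 1 := by ext x; simp [g, sq, hff]
  have hsupp : g.support = Finset.univ := by ext x; simp [g, Subtype.ext_iff, hfix]
  have := Perm.two_dvd_card_support hg
  rwa [hsupp, Finset.card_univ, ← Nat.card_eq_fintype_card, Nat.card_coe_set_eq,
    ← even_iff_two_dvd] at this

variable [DecidableEq α]

theorem mapsTo_swap {s t : α} {S : Set α} (h : s ∈ S ↔ t ∈ S) : MapsTo (swap s t) S S := by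
  intro y hy
  rcases eq_or_ne y s with rfl | hys
  · simpa using h.mp hy
  rcases eq_or_ne y t with rfl | hyt
  · simpa using h.mpr hy
  · rwa [swap_apply_of_ne_of_ne hys hyt]

theorem mapsTo_swap_mul_mul_swap {s t : α} {B : Perm α} {S : Set α} (h : s ∈ S ↔ t ∈ S)
    (hB : MapsTo B S S) : MapsTo (swap s t * B * swap s t) S S :=
  ((mapsTo_swap h).comp hB).comp (mapsTo_swap h)

theorem mapsTo_swap_mul_mul_swap_iff {s t : α} {B : Perm α} {S : Set α}
    (h : s ∈ S ↔ t ∈ S) : MapsTo (swap s t * B * swap s t) S S ↔ MapsTo B S S :=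
  ⟨fun hB => by simpa [mul_assoc] using mapsTo_swap_mul_mul_swap h hB,
    mapsTo_swap_mul_mul_swap h⟩

end

section

variable {α : Type*} [DecidableEq α] [Finite α] {J A : Perm α} {s t : α}

theorem mem_orbit_closure_swap_conj (hJ : J * J = 1) (hJfix : ∀ x, J x ≠ x)
    (hA : A * A = 1) (hAfix : ∀ x, A x ≠ x) (hst : s ∉ orbit (closure {J, A}) t) :
    t ∈ orbit (closure {J, swap s t * A * swap s t}) s := by
  set Q := orbit (closure {J, swap s t * A * swap s t}) s
  set Os := orbit (closure {J, A}) s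
  by_contra htQ
  have htOs : t ∉ Os := fun h => hst (mem_orbit_symm.mp h)
  have hts : t ≠ s := fun h => htOs (h ▸ mem_orbit_self s)
  have hJ_even : Even (Q ∩ Os).ncard := even_ncard_of_mapsTo hJ hJfix
    ((mapsTo_orbit_closure_pair_left _ _ s).inter_inter (mapsTo_orbit_closure_pair_left _ _ s))
  have hA_even : Even (swap s t ⁻¹' Q ∩ Os).ncard := by
    refine even_ncard_of_mapsTo hA hAfix
      (MapsTo.inter_inter (fun y (hy : swap s t y ∈ Q) => ?_)
        (mapsTo_orbit_closure_pair_right _ _ s))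
    simpa using mapsTo_orbit_closure_pair_right _ _ s hy
  have hinsert : Q ∩ Os = insert s (swap s t ⁻¹' Q ∩ Os) := by
    ext y
    by_cases hys : y = s
    · simp [hys, Q, Os, mem_orbit_self]
    by_cases hyt : y = t
    · simp [hyt, htQ, htOs, hts]
    · simp [hys, swap_apply_of_ne_of_ne hys hyt]
  have hs : s ∉ swap s t ⁻¹' Q ∩ Os := fun h => htQ (by simpa using h.1)
  rw [hinsert, ncard_insert_of_notMem hs] at hJ_even
  exact Nat.not_even_iff_odd.mpr hA_even.add_one hJ_even

theorem orbit_closure_swap_conj_self (hJ : J * J = 1) (hJfix : ∀ x, J x ≠ x)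
    (hA : A * A = 1) (hAfix : ∀ x, A x ≠ x) (hst : s ∉ orbit (closure {J, A}) t) :
    orbit (closure {J, swap s t * A * swap s t}) s =
      orbit (closure {J, A}) s ∪ orbit (closure {J, A}) t := by
  set Q := orbit (closure {J, swap s t * A * swap s t}) s
  set O := orbit (closure {J, A}) s ∪ orbit (closure {J, A}) t
  have hsQ : s ∈ Q := mem_orbit_self s
  have htQ : t ∈ Q := mem_orbit_closure_swap_conj hJ hJfix hA hAfix hst
  have hsO : s ∈ O := Or.inl (mem_orbit_self s)
  have htO : t ∈ O := Or.inr (mem_orbit_self t)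
  have hAQ : MapsTo A Q Q := (mapsTo_swap_mul_mul_swap_iff (iff_of_true hsQ htQ)).mp
    (mapsTo_orbit_closure_pair_right _ _ s)
  have hJO : MapsTo J O O :=
    (mapsTo_orbit_closure_pair_left _ _ s).union_union (mapsTo_orbit_closure_pair_left _ _ t)
  have hAO : MapsTo A O O :=
    (mapsTo_orbit_closure_pair_right _ _ s).union_union (mapsTo_orbit_closure_pair_right _ _ t)
  refine Subset.antisymm ?_ (Set.union_subset ?_ ?_)
  · exact orbit_closure_pair_subset hJO (mapsTo_swap_mul_mul_swap (iff_of_true hsO htO) hAO) hsO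
  · exact orbit_closure_pair_subset (mapsTo_orbit_closure_pair_left _ _ s) hAQ hsQ
  · exact orbit_closure_pair_subset (mapsTo_orbit_closure_pair_left _ _ s) hAQ htQ

theorem orbit_closure_swap_conj_of_notMem {x : α} (hs : s ∉ orbit (closure {J, A}) x)
    (ht : t ∉ orbit (closure {J, A}) x) :
    orbit (closure {J, swap s t * A * swap s t}) x = orbit (closure {J, A}) x := by
  have hsub : orbit (closure {J, swap s t * A * swap s t}) x ⊆ orbit (closure {J, A}) x :=
    orbit_closure_pair_subset (mapsTo_orbit_closure_pair_left _ _ x)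
      ((mapsTo_swap_mul_mul_swap_iff (iff_of_false hs ht)).mpr
        (mapsTo_orbit_closure_pair_right _ _ x)) (mem_orbit_self x)
  refine hsub.antisymm (orbit_closure_pair_subset (mapsTo_orbit_closure_pair_left _ _ x) ?_
    (mem_orbit_self x))
  have hs' : s ∉ orbit (closure {J, swap s t * A * swap s t}) x := fun h => hs (hsub h)
  have ht' : t ∉ orbit (closure {J, swap s t * A * swap s t}) x := fun h => ht (hsub h)
  exact (mapsTo_swap_mul_mul_swap_iff (iff_of_false hs' ht')).mp
    (mapsTo_orbit_closure_pair_right _ _ x)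

theorem range_orbit_closure_swap_conj (hJ : J * J = 1) (hJfix : ∀ x, J x ≠ x)
    (hA : A * A = 1) (hAfix : ∀ x, A x ≠ x) (hst : s ∉ orbit (closure {J, A}) t) :
    range (orbit (closure {J, swap s t * A * swap s t})) =
      (range (orbit (closure {J, A})) \ {orbit (closure {J, A}) s, orbit (closure {J, A}) t}) ∪
        {orbit (closure {J, A}) s ∪ orbit (closure {J, A}) t} := by
  have hself := orbit_closure_swap_conj_self hJ hJfix hA hAfix hst
  ext S
  simp only [mem_union, mem_sdiff, mem_range, mem_insert_iff, mem_singleton_iff]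
  constructor
  · rintro ⟨x, rfl⟩
    by_cases hx : x ∈ orbit (closure {J, A}) s ∪ orbit (closure {J, A}) t
    · exact Or.inr (hself ▸ orbit_eq_iff.mpr (hself ▸ hx))
    · rw [mem_union, not_or] at hx
      rw [orbit_closure_swap_conj_of_notMem (mt mem_orbit_symm.mp hx.1)
        (mt mem_orbit_symm.mp hx.2)]
      exact Or.inl ⟨⟨x, rfl⟩, by rw [orbit_eq_iff, orbit_eq_iff, not_or]; exact hx⟩
  · rintro (⟨⟨x, rfl⟩, hx⟩ | rfl)
    · rw [orbit_eq_iff, orbit_eq_iff, not_or] at hx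
      exact ⟨x, orbit_closure_swap_conj_of_notMem (mt mem_orbit_symm.mp hx.1)
        (mt mem_orbit_symm.mp hx.2)⟩
    · exact ⟨s, hself⟩

end

theorem Finset.map_val_insert_erase_erase {β γ : Type*} [DecidableEq β] [DecidableEq γ]
    (f : β → γ) {F : Finset β} {a b u : β} (ha : a ∈ F) (hb : b ∈ F) (hab : a ≠ b)
    (hu : u ∉ F) :
    (insert u ((F.erase a).erase b)).val.map f =
      f u ::ₘ ((F.val.map f).erase (f a)).erase (f b) := by
  rw [insert_val_of_notMem fun h => hu (mem_of_mem_erase (mem_of_mem_erase h)),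
    Multiset.map_cons, erase_val, erase_val,
    Multiset.map_erase_of_mem _ _ ((Multiset.mem_erase_of_ne hab.symm).mpr hb),
    Multiset.map_erase_of_mem _ _ ha]

theorem orbitSizes_eq_map_natCard {α : Type*} [Fintype α] (G : Subgroup (Perm α))
    {F : Finset (Set α)} (hF : (F : Set (Set α)) = range (orbit G)) :
    orbitSizes G = F.val.map fun S : Set α => Nat.card S := by
  let : Fintype (orbitRel.Quotient G α) := Fintype.ofFinite _
  have hF' : F = Finset.univ.map ⟨_, orbitRel.Quotient.orbit_injective (G := G) (α := α)⟩ := by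
    refine Finset.coe_injective (hF.trans ?_)
    rw [Finset.coe_map, Finset.coe_univ, image_univ]
    exact Quotient.mk''_surjective.range_comp orbitRel.Quotient.orbit
  rw [hF', Finset.map_val, Multiset.map_map]
  refine Multiset.map_congr rfl fun q _ => ?_
  simp [orbitRel.Quotient.orbit_eq_orbit_out q Quotient.out_eq']

theorem orbitSizes_closure_swap_conj {α : Type*} [DecidableEq α] [Fintype α] {J A : Perm α}
    {s t : α} (hJ : J * J = 1) (hJfix : ∀ x, J x ≠ x) (hA : A * A = 1)
    (hAfix : ∀ x, A x ≠ x) (hst : s ∉ orbit (closure {J, A}) t) :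
    orbitSizes (closure {J, swap s t * A * swap s t}) =
      ((orbitSizes (closure {J, A})).erase (Nat.card (orbit (closure {J, A}) s))).erase
          (Nat.card (orbit (closure {J, A}) t)) +
        {Nat.card (orbit (closure {J, A}) s) + Nat.card (orbit (closure {J, A}) t)} := by
  classical
  set G := closure {J, A}
  set F := (finite_range (orbit G : α → Set α)).toFinset
  have hF : (F : Set (Set α)) = range (orbit G) := Finite.coe_toFinset _
  have hne : orbit G s ≠ orbit G t := fun h => hst (h ▸ mem_orbit_self s)
  have hdisj : Disjoint (orbit G s) (orbit G t) := (orbit.eq_or_disjoint s t).resolve_left hne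
  have hunion : orbit G s ∪ orbit G t ∉ F := by
    rw [← Finset.mem_coe, hF]
    rintro ⟨x, hx⟩
    have hs : s ∈ orbit G x := hx ▸ Or.inl (mem_orbit_self s)
    have ht : t ∈ orbit G x := hx ▸ Or.inr (mem_orbit_self t)
    rw [← orbit_eq_iff.mpr hs] at ht
    exact hst (mem_orbit_symm.mp ht)
  have hF' : ((insert (orbit G s ∪ orbit G t) ((F.erase (orbit G s)).erase (orbit G t)) :
      Finset (Set α)) : Set (Set α)) = range (orbit (closure {J, swap s t * A * swap s t})) := by
    rw [range_orbit_closure_swap_conj hJ hJfix hA hAfix hst, Finset.coe_insert,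
      Finset.coe_erase, Finset.coe_erase, hF, insert_eq, union_comm, sdiff_sdiff,
      singleton_union, pair_comm]
  rw [orbitSizes_eq_map_natCard _ hF, orbitSizes_eq_map_natCard _ hF',
    Finset.map_val_insert_erase_erase _ (by simp [F]) (by simp [F]) hne hunion,
    Nat.card_coe_set_eq, ncard_union_eq hdisj, ← Nat.card_coe_set_eq, ← Nat.card_coe_set_eq,
    ← Multiset.singleton_add, add_comm]

theorem matching_swap_merges_components_general (n : ℕ)
    (J A : PerfMatching (2 * n)) (s t : Fin (2 * n))
    (hst : s ∉ MulAction.orbit (Subgroup.closure {J.1, A.1}) t) :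
    ({S : Set (Fin (2 * n)) | ∃ x, S =
        MulAction.orbit (Subgroup.closure {J.1, Equiv.swap s t * A.1 * Equiv.swap s t}) x} =
      ({S : Set (Fin (2 * n)) | ∃ x, S = MulAction.orbit (Subgroup.closure {J.1, A.1}) x} \
          {MulAction.orbit (Subgroup.closure {J.1, A.1}) s,
            MulAction.orbit (Subgroup.closure {J.1, A.1}) t}) ∪
        {(MulAction.orbit (Subgroup.closure {J.1, A.1}) s : Set (Fin (2 * n))) ∪
          MulAction.orbit (Subgroup.closure {J.1, A.1}) t}) ∧
    dMatch J.1 (Equiv.swap s t * A.1 * Equiv.swap s t) =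
      (((dMatch J.1 A.1).erase
          (Nat.card (MulAction.orbit (Subgroup.closure {J.1, A.1}) s))).erase
          (Nat.card (MulAction.orbit (Subgroup.closure {J.1, A.1}) t))) +
        {Nat.card (MulAction.orbit (Subgroup.closure {J.1, A.1}) s) +
          Nat.card (MulAction.orbit (Subgroup.closure {J.1, A.1}) t)} := by
  have hrange (G : Subgroup (Perm (Fin (2 * n)))) :
      {S : Set (Fin (2 * n)) | ∃ x, S = orbit G x} = range (orbit G) :=
    ext fun _ => exists_congr fun _ => eq_comm
  simp only [hrange]
  exact ⟨range_orbit_closure_swap_conj J.2.1 J.2.2 A.2.1 A.2.2 hst,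
    orbitSizes_closure_swap_conj J.2.1 J.2.2 A.2.1 A.2.2 hst⟩

/-- Let `J`, `A` be perfect matchings of `Fin (2n)` and let `s`, `t` lie in different
connected components (orbits of `⟨J,A⟩`). Conjugating `A` by the transposition `(s t)`
merges exactly those two components: the orbits of `⟨J, (s t)A(s t)⟩` are the orbits
of `⟨J,A⟩` other than those of `s` and `t`, together with the union of the orbits of
`s` and `t`. In particular `d(J, (s t)A(s t))` is obtained from `d(J,A)` by replacing
the parts given by the sizes of the orbits of `s` and of `t` by a single part equal to
their sum. -/
theorem matching_swap_merges_components (n : ℕ) (hn : 1 ≤ n)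
    (J A : PerfMatching (2 * n)) (s t : Fin (2 * n))
    (hst : s ∉ MulAction.orbit (Subgroup.closure {J.1, A.1}) t) :
    ({S : Set (Fin (2 * n)) | ∃ x, S =
        MulAction.orbit (Subgroup.closure {J.1, Equiv.swap s t * A.1 * Equiv.swap s t}) x} =
      ({S : Set (Fin (2 * n)) | ∃ x, S = MulAction.orbit (Subgroup.closure {J.1, A.1}) x} \
          {MulAction.orbit (Subgroup.closure {J.1, A.1}) s,
            MulAction.orbit (Subgroup.closure {J.1, A.1}) t}) ∪
        {(MulAction.orbit (Subgroup.closure {J.1, A.1}) s : Set (Fin (2 * n))) ∪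
          MulAction.orbit (Subgroup.closure {J.1, A.1}) t}) ∧
    dMatch J.1 (Equiv.swap s t * A.1 * Equiv.swap s t) =
      (((dMatch J.1 A.1).erase
          (Nat.card (MulAction.orbit (Subgroup.closure {J.1, A.1}) s))).erase
          (Nat.card (MulAction.orbit (Subgroup.closure {J.1, A.1}) t))) +
        {Nat.card (MulAction.orbit (Subgroup.closure {J.1, A.1}) s) +
          Nat.card (MulAction.orbit (Subgroup.closure {J.1, A.1}) t)} :=
  matching_swap_merges_components_general n J A s t hst
end
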